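/- arXiv:1610.06539 — 9 statements merged into one kernel-verified Lean document; each statement's English description precedes it below -/
import Mathlib

section
/- In a connected graph G that is not complete, a subset D of V(G) is a connected dominating set if and only if D intersects every minimal cutset of G. -/
open SimpleGraph Finset BigOperators

variable {V : Type*} [Fintype V] [DecidableEq V]

/-- `S` is a connected dominating set of `G`: every vertex is in `S` or has a neighbor in `S`,
and any two vertices of `S` are joined by a walk staying inside `S`
(i.e. `S` induces a connected subgraph). -/
def SimpleGraph.IsCDSet (G : SimpleGraph V) (S : Finset V) : Prop :=
  (∀ v : V, v ∈ S ∨ ∃ u ∈ S, G.Adj u v) ∧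
  ∀ u ∈ S, ∀ v ∈ S, ∃ p : G.Walk u v, ∀ x ∈ p.support, x ∈ S

/-- `(w, t)` is a connected-domishold structure of `G`. -/
def SimpleGraph.IsCDStructure (G : SimpleGraph V) (w : V → ℝ) (t : ℝ) : Prop :=
  (∀ v, 0 ≤ w v) ∧ 0 ≤ t ∧ ∀ S : Finset V, (t ≤ ∑ x ∈ S, w x) ↔ G.IsCDSet S

/-- `G` is connected-domishold. -/
def SimpleGraph.ConnectedDomishold (G : SimpleGraph V) : Prop :=
  ∃ (w : V → ℝ) (t : ℝ), G.IsCDStructure w t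

/-- `S` is a cutset of `G`: `G - S` is disconnected, i.e. there exist two vertices outside `S`
such that every walk between them meets `S`. -/
def SimpleGraph.IsCutset (G : SimpleGraph V) (S : Finset V) : Prop :=
  ∃ u v : V, u ∉ S ∧ v ∉ S ∧ u ≠ v ∧ ∀ p : G.Walk u v, ∃ x ∈ p.support, x ∈ S

/-- `S` is a minimal cutset of `G`. -/
def SimpleGraph.IsMinCutset (G : SimpleGraph V) (S : Finset V) : Prop :=
  G.IsCutset S ∧ ∀ S' ⊆ S, G.IsCutset S' → S' = S

/-- A hypergraph on vertex set `V`, given by its hyperedge predicate `Eh`, is threshold. -/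
def HypThreshold (Eh : Finset V → Prop) : Prop :=
  ∃ (w : V → ℝ) (t : ℝ), (∀ v, 0 ≤ w v) ∧ 0 ≤ t ∧
    ∀ X : Finset V, (∑ v ∈ X, w v ≤ t) ↔ ∀ e, Eh e → ¬ e ⊆ X

def HypOneSperner (Eh : Finset V → Prop) : Prop :=
  ∀ e f, Eh e → Eh f → e ≠ f → min (e \ f).card (f \ e).card = 1

def HypTwoSummable (Eh : Finset V → Prop) : Prop :=
  ∃ A₁ A₂ B₁ B₂ : Finset V,
    (∃ e, Eh e ∧ e ⊆ A₁) ∧ (∃ e, Eh e ∧ e ⊆ A₂) ∧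
    (∀ e, Eh e → ¬ e ⊆ B₁) ∧ (∀ e, Eh e → ¬ e ⊆ B₂) ∧
    ∀ v : V, ((if v ∈ A₁ then 1 else 0) + (if v ∈ A₂ then 1 else 0) : ℕ)
           = (if v ∈ B₁ then 1 else 0) + (if v ∈ B₂ then 1 else 0)

set_option linter.unusedSectionVars false in
lemma walk_adj_end {G : SimpleGraph V} : ∀ {a b : V} (p : G.Walk a b), a ≠ b →
    ∃ x ∈ p.support, G.Adj x b := by
  intro a b p
  induction p with
  | nil => exact fun h => absurd rfl h
  | @cons a c b h q ih =>
    intro _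
    by_cases hc : c = b
    · subst hc
      exact ⟨a, (SimpleGraph.Walk.cons h q).start_mem_support, h⟩
    · obtain ⟨x, hx, hxb⟩ := ih hc
      exact ⟨x, by rw [SimpleGraph.Walk.support_cons]; exact List.mem_cons_of_mem _ hx, hxb⟩

set_option linter.unusedSectionVars false in
lemma walk_adj_start {G : SimpleGraph V} : ∀ {a b : V} (p : G.Walk a b), a ≠ b →
    ∃ x ∈ p.support, G.Adj a x := by
  intro a b p
  induction p with
  | nil => exact fun h => absurd rfl h
  | @cons a c b h q ih =>
    intro _
    exact ⟨c, by rw [SimpleGraph.Walk.support_cons]; exact List.mem_cons_of_mem _ q.start_mem_support, h⟩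

set_option linter.unusedSectionVars false in
lemma exists_minCutset_subset {G : SimpleGraph V} :
    ∀ S : Finset V, G.IsCutset S → ∃ T ⊆ S, G.IsMinCutset T := by
  intro S
  induction S using Finset.strongInductionOn with
  | _ S ih =>
    intro hS
    by_cases hmin : ∀ T ⊆ S, G.IsCutset T → T = S
    · exact ⟨S, Finset.Subset.refl S, hS, hmin⟩
    · push_neg at hmin
      obtain ⟨T, hTS, hT, hne⟩ := hmin
      obtain ⟨U, hUT, hU⟩ := ih T (Finset.ssubset_iff_subset_ne.2 ⟨hTS, hne⟩) hT
      exact ⟨U, hUT.trans hTS, hU⟩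

/-- In a connected non-complete graph `G`, a set `D` is a connected dominating set iff it
intersects every minimal cutset of `G`. -/
theorem cdSet_iff_meets_every_minCutset (G : SimpleGraph V) (hconn : G.Connected)
    (hnotcomplete : ∃ u v : V, u ≠ v ∧ ¬ G.Adj u v) (D : Finset V) :
    G.IsCDSet D ↔ ∀ S : Finset V, G.IsMinCutset S → (D ∩ S).Nonempty := by
  classical
  constructor
  · rintro ⟨hdom, hDconn⟩ S ⟨hS, -⟩
    by_contra hem
    have hDS : ∀ x ∈ D, x ∉ S := fun x hx hxS => hem ⟨x, Finset.mem_inter.2 ⟨hx, hxS⟩⟩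
    obtain ⟨u, v, huS, hvS, huv, hsep⟩ := hS
    -- reach a vertex of D from any vertex by a short walk
    have reach : ∀ a : V, ∃ (d : V) (w : G.Walk a d), d ∈ D ∧
        ∀ x ∈ w.support, x = a ∨ x ∈ D := by
      intro a
      rcases hdom a with ha | ⟨d, hd, hadj⟩
      · exact ⟨a, SimpleGraph.Walk.nil, ha, fun x hx => Or.inl (by simpa using hx)⟩
      · refine ⟨d, SimpleGraph.Walk.cons hadj.symm SimpleGraph.Walk.nil, hd, ?_⟩
        intro x hx
        simp only [SimpleGraph.Walk.support_cons, SimpleGraph.Walk.support_nil,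
          List.mem_cons, List.mem_singleton] at hx
        rcases hx with h | h | h
        · exact Or.inl h
        · exact Or.inr (h ▸ hd)
        · exact absurd h (by simp)
    obtain ⟨du, w1, hduD, hw1⟩ := reach u
    obtain ⟨dv, w2, hdvD, hw2⟩ := reach v
    obtain ⟨p, hp⟩ := hDconn du hduD dv hdvD
    obtain ⟨x, hx, hxS⟩ := hsep (w1.append (p.append w2.reverse))
    rw [SimpleGraph.Walk.mem_support_append_iff] at hx
    rcases hx with hx | hx
    · rcases hw1 x hx with rfl | hxD
      · exact huS hxS
      · exact hDS x hxD hxS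
    · rw [SimpleGraph.Walk.mem_support_append_iff] at hx
      rcases hx with hx | hx
      · exact hDS x (hp x hx) hxS
      · rw [SimpleGraph.Walk.support_reverse, List.mem_reverse] at hx
        rcases hw2 x hx with rfl | hxD
        · exact hvS hxS
        · exact hDS x hxD hxS
  · intro hmeet
    have hcut : ∀ S : Finset V, G.IsCutset S → (D ∩ S).Nonempty := by
      intro S hS
      obtain ⟨T, hTS, hT⟩ := exists_minCutset_subset S hS
      obtain ⟨x, hx⟩ := hmeet T hT
      rw [Finset.mem_inter] at hx
      exact ⟨x, Finset.mem_inter.2 ⟨hx.1, hTS hx.2⟩⟩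
    obtain ⟨a, b, hab, hnadj⟩ := hnotcomplete
    constructor
    · -- domination
      intro v
      by_contra hv
      push_neg at hv
      obtain ⟨hvD, hvN⟩ := hv
      by_cases hall : ∀ u : V, u ≠ v → G.Adj v u
      · -- v adjacent to everything else; N(a) is a cutset, so D is nonempty
        have hav : a ≠ v := by rintro rfl; exact hnadj (hall b hab.symm)
        set Na : Finset V := Finset.univ.filter (fun x => G.Adj a x) with hNa
        have hcutset : G.IsCutset Na := by
          refine ⟨a, b, ?_, ?_, hab, ?_⟩
          · simp [hNa]
          · simp [hNa, hnadj]
          · intro p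
            obtain ⟨x, hx, hax⟩ := walk_adj_start p hab
            exact ⟨x, hx, by simp [hNa, hax]⟩
        obtain ⟨d, hd⟩ := hcut Na hcutset
        rw [Finset.mem_inter] at hd
        have hdv : d ≠ v := fun h => hvD (h ▸ hd.1)
        exact hvN d hd.1 ((hall d hdv).symm)
      · push_neg at hall
        obtain ⟨u, huv, hunadj⟩ := hall
        set Nv : Finset V := Finset.univ.filter (fun x => G.Adj v x) with hNv
        have hcutset : G.IsCutset Nv := by
          refine ⟨u, v, ?_, ?_, huv, ?_⟩
          · simp [hNv, fun h => hunadj h]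
          · simp [hNv]
          · intro p
            obtain ⟨x, hx, hxv⟩ := walk_adj_end p huv
            exact ⟨x, hx, by simp [hNv, hxv.symm]⟩
        obtain ⟨d, hd⟩ := hcut Nv hcutset
        rw [Finset.mem_inter, hNv, Finset.mem_filter] at hd
        exact hvN d hd.1 hd.2.2.symm
    · -- connectivity
      intro u hu v hv
      by_contra hno
      push_neg at hno
      set C : Finset V := Finset.univ.filter
        (fun x => ∃ p : G.Walk u x, ∀ y ∈ p.support, y ∈ D) with hC
      have huC : u ∈ C := by
        refine Finset.mem_filter.2 ⟨Finset.mem_univ _, SimpleGraph.Walk.nil, ?_⟩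
        intro y hy
        simp only [SimpleGraph.Walk.support_nil, List.mem_singleton] at hy
        exact hy ▸ hu
      have hvC : v ∉ C := by
        intro h
        obtain ⟨p, hp⟩ := (Finset.mem_filter.1 h).2
        obtain ⟨x, hx, hxD⟩ := hno p
        exact hxD (hp x hx)
      set S : Finset V := Finset.univ.filter
        (fun x => x ∉ D ∧ ∃ y ∈ C, G.Adj y x) with hSdef
      have hCD : ∀ x ∈ C, x ∈ D := by
        intro x hx
        obtain ⟨p, hp⟩ := (Finset.mem_filter.1 hx).2
        exact hp x p.end_mem_support
      have key : ∀ (a b : V) (p : G.Walk a b), a ∈ C → b ∉ C →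
          ∃ x ∈ p.support, x ∈ S := by
        intro a b p
        induction p with
        | nil => exact fun ha hb => absurd ha hb
        | @cons a c b h q ih =>
          intro ha hb
          by_cases hcC : c ∈ C
          · obtain ⟨x, hx, hxS⟩ := ih hcC hb
            exact ⟨x, by rw [SimpleGraph.Walk.support_cons]; exact List.mem_cons_of_mem _ hx, hxS⟩
          · have hmem : c ∈ (SimpleGraph.Walk.cons h q).support := by
              rw [SimpleGraph.Walk.support_cons]
              exact List.mem_cons_of_mem _ q.start_mem_support
            refine ⟨c, hmem, ?_⟩
            have hcD : c ∉ D := by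
              intro hcD
              apply hcC
              obtain ⟨w, hw⟩ := (Finset.mem_filter.1 ha).2
              refine Finset.mem_filter.2 ⟨Finset.mem_univ _,
                w.append (SimpleGraph.Walk.cons h SimpleGraph.Walk.nil), ?_⟩
              intro y hy
              rw [SimpleGraph.Walk.mem_support_append_iff] at hy
              rcases hy with hy | hy
              · exact hw y hy
              · simp only [SimpleGraph.Walk.support_cons, SimpleGraph.Walk.support_nil,
                  List.mem_cons, List.mem_singleton] at hy
                rcases hy with h1 | h1 | h'
                · exact h1 ▸ hCD a ha
                · exact h1 ▸ hcD
                · exact absurd h' (by simp)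
            exact Finset.mem_filter.2 ⟨Finset.mem_univ _, hcD, ⟨a, ha, h⟩⟩
      have huv : u ≠ v := fun h => hvC (h ▸ huC)
      have hcutset : G.IsCutset S := by
        refine ⟨u, v, ?_, ?_, huv, fun p => key u v p huC hvC⟩
        · intro h
          exact (Finset.mem_filter.1 h).2.1 hu
        · intro h
          exact (Finset.mem_filter.1 h).2.1 hv
      obtain ⟨d, hd⟩ := hcut S hcutset
      rw [Finset.mem_inter] at hd
      exact (Finset.mem_filter.1 hd.2).2.1 hd.1
end

section
/- Let G be a connected graph and let G' be obtained from G by adding one universal vertex (a vertex adjacent to all vertices of G). Then G is connected-domishold if and only if G' is connected-domishold. -/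
/-
A set of vertices of `G'` containing the universal vertex is always a connected dominating set,
since every vertex is adjacent to it; a set avoiding it is a connected dominating set of `G'`
exactly when it is one of `G` (for `G` nonempty). Hence a threshold structure `(w, t)` of `G`
extends to `G'` by giving the universal vertex weight `t`, and a structure of `G'` restricts to
one of `G`.
-/

open SimpleGraph Finset BigOperators

variable {V : Type*} [Fintype V] [DecidableEq V]

/-- The graph obtained from `G` by adding one universal vertex (`none`), adjacent to all
vertices of `G`. -/
def addUniversal (G : SimpleGraph V) : SimpleGraph (Option V) :=
  SimpleGraph.fromRel (fun a b =>
    (a = none ∧ b ≠ none) ∨ (∃ u v : V, a = some u ∧ b = some v ∧ G.Adj u v))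

section

variable {W : Type*} {G : SimpleGraph W}

@[simp]
lemma addUniversal_adj_none_some (v : W) : (addUniversal G).Adj none (some v) := by
  simp [addUniversal]

@[simp]
lemma addUniversal_adj_some_none (v : W) : (addUniversal G).Adj (some v) none :=
  (addUniversal_adj_none_some v).symm

@[simp]
lemma addUniversal_adj_some_some {a b : W} :
    (addUniversal G).Adj (some a) (some b) ↔ G.Adj a b := by
  simp [addUniversal, G.adj_comm]
  aesop

variable (G) in
def addUniversalHom : G →g addUniversal G :=
  ⟨some, addUniversal_adj_some_some.2⟩

theorem exists_walk_support_map_some_eq :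
    ∀ {a b : W} (p : (addUniversal G).Walk (some a) (some b)), none ∉ p.support →
      ∃ q : G.Walk a b, q.support.map some = p.support
  | _, _, .nil, _ => ⟨.nil, rfl⟩
  | _, _, .cons (v := some _) h p, hp => by
      obtain ⟨q, hq⟩ := exists_walk_support_map_some_eq p (fun h' => hp (by simp [h']))
      exact ⟨.cons (addUniversal_adj_some_some.1 h) q, by simp [hq]⟩
  | _, _, .cons (v := none) _ p, hp => absurd p.start_mem_support (fun h' => hp (by simp [h']))

lemma exists_addUniversal_walk_to_none (u : Option W) :
    ∃ p : (addUniversal G).Walk u none, ∀ x ∈ p.support, x = u ∨ x = none := by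
  cases u with
  | none => exact ⟨.nil, by simp⟩
  | some v => exact ⟨.cons (addUniversal_adj_some_none v) .nil, by simp⟩

lemma isCDSet_addUniversal_of_none_mem {S : Finset (Option W)} (hS : none ∈ S) :
    (addUniversal G).IsCDSet S := by
  refine ⟨fun v => ?_, fun u hu v hv => ?_⟩
  · cases v with
    | none => exact .inl hS
    | some v => exact .inr ⟨none, hS, addUniversal_adj_none_some v⟩
  · obtain ⟨p, hp⟩ := exists_addUniversal_walk_to_none (G := G) u
    obtain ⟨q, hq⟩ := exists_addUniversal_walk_to_none (G := G) v
    refine ⟨p.append q.reverse, fun x hx => ?_⟩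
    rw [SimpleGraph.Walk.mem_support_append_iff, SimpleGraph.Walk.support_reverse,
      List.mem_reverse] at hx
    rcases hx with hx | hx
    · rcases hp x hx with rfl | rfl <;> assumption
    · rcases hq x hx with rfl | rfl <;> assumption

variable [Nonempty W]

lemma isCDSet_addUniversal_map_some_iff (T : Finset W) :
    (addUniversal G).IsCDSet (T.map .some) ↔ G.IsCDSet T := by
  constructor
  · rintro ⟨hdom, hconn⟩
    refine ⟨fun v => by simpa using hdom (some v), fun u hu v hv => ?_⟩
    obtain ⟨p, hp⟩ := hconn (some u) (by simpa) (some v) (by simpa)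
    obtain ⟨q, hq⟩ := exists_walk_support_map_some_eq p (fun h => by simpa using hp none h)
    refine ⟨q, fun x hx => ?_⟩
    simpa using hp (some x) (hq ▸ List.mem_map_of_mem hx)
  · rintro ⟨hdom, hconn⟩
    obtain ⟨a, ha⟩ : T.Nonempty := by
      obtain ⟨v⟩ := ‹Nonempty W›
      rcases hdom v with hv | ⟨u, hu, -⟩
      exacts [⟨v, hv⟩, ⟨u, hu⟩]
    refine ⟨?_, ?_⟩
    · rintro (_ | v)
      · exact .inr ⟨some a, by simpa, by simp⟩
      · simpa using hdom v
    · simp only [Finset.mem_map, Function.Embedding.some_apply]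
      rintro _ ⟨u, hu, rfl⟩ _ ⟨v, hv, rfl⟩
      obtain ⟨q, hq⟩ := hconn u hu v hv
      exact ⟨q.map (addUniversalHom G), by simpa [addUniversalHom] using hq⟩

variable {t : ℝ}

lemma SimpleGraph.IsCDStructure.addUniversal_optionElim {w : W → ℝ}
    (h : G.IsCDStructure w t) :
    (addUniversal G).IsCDStructure (fun o => o.elim t w) t := by
  obtain ⟨hw, ht, hiff⟩ := h
  have hnonneg : ∀ o : Option W, 0 ≤ o.elim t w := by rintro (_ | v) <;> simp [ht, hw]
  refine ⟨hnonneg, ht, fun S => ?_⟩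
  by_cases hS : none ∈ S
  · have hle : t ≤ ∑ o ∈ S, o.elim t w := Finset.single_le_sum (fun o _ => hnonneg o) hS
    simp only [hle, isCDSet_addUniversal_of_none_mem hS]
  · classical
    rw [← S.erase_eq_of_notMem hS, ← Finset.map_some_eraseNone, Finset.sum_map,
      isCDSet_addUniversal_map_some_iff]
    exact hiff _

lemma SimpleGraph.IsCDStructure.of_addUniversal {w : Option W → ℝ}
    (h : (addUniversal G).IsCDStructure w t) : G.IsCDStructure (w ∘ some) t :=
  ⟨fun v => h.1 (some v), h.2.1, fun T => by
    rw [← isCDSet_addUniversal_map_some_iff, ← h.2.2, Finset.sum_map]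
    rfl⟩

end

/-- Let `G` be a connected graph and `G'` be obtained from `G` by adding a universal vertex.
Then `G` is connected-domishold iff `G'` is connected-domishold. -/
theorem connectedDomishold_addUniversal (G : SimpleGraph V) (hconn : G.Connected) :
    G.ConnectedDomishold ↔ (addUniversal G).ConnectedDomishold := by
  have := hconn.nonempty
  exact ⟨fun ⟨_, _, h⟩ => ⟨_, _, h.addUniversal_optionElim⟩,
    fun ⟨_, _, h⟩ => ⟨_, _, h.of_addUniversal⟩⟩
end

section
/- Let G be a connected split graph without universal vertices. Then the set of minimal cutsets of G equals the set of inclusion-wise minimal open neighborhoods of G, i.e., the cutset hypergraph of G equals the neighborhood hypergraph of G. -/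
open SimpleGraph Finset BigOperators

variable {V : Type*} [Fintype V] [DecidableEq V]

/-- `v` is a universal vertex of `G`: adjacent to every other vertex. -/
def SimpleGraph.IsUniversalVtx (G : SimpleGraph V) (v : V) : Prop :=
  ∀ u : V, u ≠ v → G.Adj v u

/-- `G` is a split graph: its vertices partition into a clique `K` and an independent set. -/
def SimpleGraph.IsSplit (G : SimpleGraph V) : Prop :=
  ∃ K : Finset V, G.IsClique (↑K : Set V) ∧
    ∀ u ∈ Kᶜ, ∀ v ∈ Kᶜ, u ≠ v → ¬ G.Adj u v

/-- `S` is an inclusion-wise minimal open neighborhood of `G`. -/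
def SimpleGraph.IsMinNeighborhood (G : SimpleGraph V) [DecidableRel G.Adj]
    (S : Finset V) : Prop :=
  (∃ v : V, S = G.neighborFinset v) ∧
    ∀ u : V, G.neighborFinset u ⊆ S → G.neighborFinset u = S

/-! Every neighbourhood of a non-universal vertex separates that vertex from a non-neighbour.
In a split graph every cutset `S` contains the neighbourhood of a vertex outside `S`: otherwise
each vertex outside `S` is, or is adjacent to, a clique vertex outside `S`, and these clique
vertices are pairwise adjacent, so `G - S` is connected. A family in which every neighbourhood
is a member and every member contains a neighbourhood has the minimal neighbourhoods as its
minimal members. -/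

namespace SimpleGraph

variable {G : SimpleGraph V}

omit [Fintype V] [DecidableEq V] in
lemma Reachable.exists_walk_support_subset {s : Set V} {u v : s}
    (h : (G.induce s).Reachable u v) : ∃ p : G.Walk u v, ∀ x ∈ p.support, x ∈ s := by
  obtain ⟨p⟩ := h
  refine ⟨p.map (Embedding.induce s).toHom, fun x hx => ?_⟩
  obtain ⟨y, -, rfl⟩ := List.mem_map.mp (Walk.support_map _ p ▸ hx)
  exact y.2

omit [Fintype V] [DecidableEq V] in
lemma IsCutset.not_preconnected_induce {S : Finset V} (hS : G.IsCutset S) :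
    ¬ (G.induce {x | x ∉ S}).Preconnected := by
  obtain ⟨u, v, hu, hv, -, hcut⟩ := hS
  intro hpre
  obtain ⟨p, hp⟩ := (hpre ⟨u, hu⟩ ⟨v, hv⟩).exists_walk_support_subset
  obtain ⟨x, hx, hxS⟩ := hcut p
  exact hp x hx hxS

lemma IsSplit.preconnected_induce_of_forall_exists_adj (hsplit : G.IsSplit) {S : Finset V}
    (hS : ∀ a ∉ S, ∃ b ∉ S, G.Adj a b) : (G.induce {x | x ∉ S}).Preconnected := by
  obtain ⟨K, hK, hI⟩ := hsplit
  set H := G.induce {x | x ∉ S}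
  have reach_clique : ∀ a : {x | x ∉ S}, ∃ k : {x | x ∉ S}, k.1 ∈ K ∧ H.Reachable a k := by
    intro a
    by_cases haK : a.1 ∈ K
    · exact ⟨a, haK, .refl a⟩
    obtain ⟨b, hbS, hab⟩ := hS a a.2
    have hbK : b ∈ K := by
      by_contra hbK
      exact hI a (mem_compl.mpr haK) b (mem_compl.mpr hbK) hab.ne hab
    exact ⟨⟨b, hbS⟩, hbK, Adj.reachable (induce_adj.mpr hab)⟩
  intro a b
  obtain ⟨k, hk, hak⟩ := reach_clique a
  obtain ⟨l, hl, hbl⟩ := reach_clique b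
  have hkl : H.Reachable k l := by
    by_cases h : k = l
    · exact h ▸ .refl k
    · exact Adj.reachable (induce_adj.mpr (hK (mem_coe.mpr hk) (mem_coe.mpr hl)
        (Subtype.coe_ne_coe.mpr h)))
  exact hak.trans (hkl.trans hbl.symm)

variable [DecidableRel G.Adj]

lemma IsSplit.exists_neighborFinset_subset_of_isCutset (hsplit : G.IsSplit) {S : Finset V}
    (hS : G.IsCutset S) : ∃ a ∉ S, G.neighborFinset a ⊆ S := by
  by_contra! h
  refine hS.not_preconnected_induce (hsplit.preconnected_induce_of_forall_exists_adj fun a ha => ?_)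
  obtain ⟨b, hb, hbS⟩ := not_subset.mp (h a ha)
  exact ⟨b, hbS, (mem_neighborFinset G a b).mp hb⟩

omit [DecidableEq V] in
lemma isCutset_of_neighborFinset_subset {S : Finset V} {u v : V} (hv : v ∉ S)
    (hN : G.neighborFinset v ⊆ S) (hu : u ∉ S) (huv : u ≠ v) : G.IsCutset S := by
  refine ⟨v, u, hv, hu, huv.symm, fun p => ?_⟩
  cases p with
  | nil => exact absurd rfl huv
  | cons h q =>
    exact ⟨_, Walk.support_cons _ _ ▸ List.mem_cons_of_mem _ q.start_mem_support,
      hN ((mem_neighborFinset G _ _).mpr h)⟩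

omit [DecidableEq V] in
lemma isCutset_neighborFinset {v : V} (hv : ¬ G.IsUniversalVtx v) :
    G.IsCutset (G.neighborFinset v) := by
  obtain ⟨u, huv, hadj⟩ : ∃ u, u ≠ v ∧ ¬ G.Adj v u := by
    simpa [IsUniversalVtx] using hv
  exact isCutset_of_neighborFinset_subset (by simp) subset_rfl (by simpa using hadj) huv

omit [DecidableEq V] in
lemma isMinCutset_iff_isMinNeighborhood_of_forall
    (hN : ∀ v, G.IsCutset (G.neighborFinset v))
    (hS : ∀ S, G.IsCutset S → ∃ a, G.neighborFinset a ⊆ S) (S : Finset V) :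
    G.IsMinCutset S ↔ G.IsMinNeighborhood S := by
  constructor
  · rintro ⟨hcut, hmin⟩
    obtain ⟨a, haS⟩ := hS S hcut
    exact ⟨⟨a, (hmin _ haS (hN a)).symm⟩, fun u hu => hmin _ hu (hN u)⟩
  · rintro ⟨⟨v, rfl⟩, hmin⟩
    refine ⟨hN v, fun S' hS' hcut => ?_⟩
    obtain ⟨a, haS'⟩ := hS S' hcut
    exact subset_antisymm hS' (hmin a (haS'.trans hS') ▸ haS')

end SimpleGraph

theorem split_minCutsets_eq_minNeighborhoods_general (G : SimpleGraph V) [DecidableRel G.Adj]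
    (hsplit : G.IsSplit) (huniv : ∀ v : V, ¬ G.IsUniversalVtx v)
    (S : Finset V) :
    G.IsMinCutset S ↔ G.IsMinNeighborhood S :=
  isMinCutset_iff_isMinNeighborhood_of_forall (fun v => isCutset_neighborFinset (huniv v))
    (fun _ hcut => (hsplit.exists_neighborFinset_subset_of_isCutset hcut).imp fun _ => And.right) S

/-- In a connected split graph without universal vertices, the minimal cutsets are exactly the
inclusion-wise minimal open neighborhoods: the cutset hypergraph equals the neighborhood
hypergraph. -/
theorem split_minCutsets_eq_minNeighborhoods (G : SimpleGraph V) [DecidableRel G.Adj]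
    (hconn : G.Connected) (hsplit : G.IsSplit) (huniv : ∀ v : V, ¬ G.IsUniversalVtx v)
    (S : Finset V) :
    G.IsMinCutset S ↔ G.IsMinNeighborhood S :=
  split_minCutsets_eq_minNeighborhoods_general G hsplit huniv S
end

section
/- Let G be a connected split graph without universal vertices, with split partition V(G) = K ∪ I where K is a clique and I is an independent set. If S is a minimal u,v-separator for some non-adjacent pair u, v in G, then S = N(u) or S = N(v). -/
open SimpleGraph Finset BigOperators

variable {V : Type*} [Fintype V] [DecidableEq V]

/-- `S` is a `u,v`-separator in `G`: `u, v ∉ S` and every `u`-`v` walk meets `S`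
(so `u` and `v` lie in different components of `G − S`). -/
def SimpleGraph.IsSeparator (G : SimpleGraph V) (u v : V) (S : Finset V) : Prop :=
  u ∉ S ∧ v ∉ S ∧ ∀ p : G.Walk u v, ∃ x ∈ p.support, x ∈ S

/-- `S` is a minimal `u,v`-separator: a separator containing no other `u,v`-separator. -/
def SimpleGraph.IsMinSeparator (G : SimpleGraph V) (u v : V) (S : Finset V) : Prop :=
  G.IsSeparator u v S ∧ ∀ S' ⊆ S, G.IsSeparator u v S' → S' = S

/-!
A minimal `u,v`-separator that contains `N(u)` is `N(u)`, since `N(u)` itself separates `u` from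
`v`. So it suffices that `S` contains `N(u)` or `N(v)`. Otherwise pick vertices `a, b ∉ S` of the
clique `K` with `a` equal or adjacent to `u` and `b` equal or adjacent to `v` (for `u ∈ I` take a
neighbour outside `S`, which lies in `K`); then `u, a, b, v` is a walk avoiding `S`.
-/

namespace SimpleGraph

variable {G : SimpleGraph V} {u v : V} {S : Finset V}

section

omit [Fintype V] [DecidableEq V]

theorem IsSeparator.symm (hS : G.IsSeparator u v S) : G.IsSeparator v u S := by
  refine ⟨hS.2.1, hS.1, fun p => ?_⟩
  obtain ⟨x, hx, hxS⟩ := hS.2.2 p.reverse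
  exact ⟨x, by simpa using hx, hxS⟩

theorem IsSeparator.not_reachable (hS : G.IsSeparator u v S) :
    ¬ (G.induce {x | x ∉ S}).Reachable ⟨u, hS.1⟩ ⟨v, hS.2.1⟩ := by
  rintro ⟨p⟩
  obtain ⟨x, hx, hxS⟩ := hS.2.2 (p.map (Embedding.induce _).toHom)
  obtain ⟨y, -, rfl⟩ := List.mem_map.mp ((Walk.support_map _ p).symm ▸ hx)
  exact y.2 hxS

theorem reachable_induce_of_eq_or_adj {s : Set V} {x y : V} (hx : x ∈ s) (hy : y ∈ s)
    (h : x = y ∨ G.Adj x y) : (G.induce s).Reachable ⟨x, hx⟩ ⟨y, hy⟩ := by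
  rcases h with rfl | h
  · rfl
  · exact Adj.reachable (by simpa using h)

theorem IsSeparator.not_eq_or_adj (hS : G.IsSeparator u v S) {a b : V} (ha : a ∉ S) (hb : b ∉ S)
    (hua : u = a ∨ G.Adj u a) (hvb : v = b ∨ G.Adj v b) : ¬ (a = b ∨ G.Adj a b) := fun hab =>
  hS.not_reachable <| (reachable_induce_of_eq_or_adj hS.1 ha hua).trans <|
    (reachable_induce_of_eq_or_adj ha hb hab).trans
      (reachable_induce_of_eq_or_adj hS.2.1 hb hvb).symm

theorem IsSeparator.ne (hS : G.IsSeparator u v S) : u ≠ v := fun h =>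
  hS.not_eq_or_adj hS.1 hS.2.1 (.inl rfl) (.inl rfl) (.inl h)

theorem IsSeparator.not_adj (hS : G.IsSeparator u v S) : ¬ G.Adj u v := fun h =>
  hS.not_eq_or_adj hS.1 hS.2.1 (.inl rfl) (.inl rfl) (.inr h)

end

omit [DecidableEq V] in
theorem IsSeparator.neighborFinset_left [DecidableRel G.Adj] (hS : G.IsSeparator u v S) :
    G.IsSeparator u v (G.neighborFinset u) := by
  refine ⟨by simp, by simpa using hS.not_adj, fun p => ?_⟩
  have hp : ¬ p.Nil := Walk.not_nil_of_ne hS.ne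
  exact ⟨p.snd, List.mem_of_mem_tail (Walk.snd_mem_tail_support hp), by simpa using p.adj_snd hp⟩

omit [DecidableEq V] in
theorem IsSeparator.neighborFinset_right [DecidableRel G.Adj] (hS : G.IsSeparator u v S) :
    G.IsSeparator u v (G.neighborFinset v) :=
  hS.symm.neighborFinset_left.symm

variable {K I : Finset V}

theorem mem_of_adj_of_mem_independent (hpart : K ∪ I = univ)
    (hI : ∀ u ∈ I, ∀ v ∈ I, u ≠ v → ¬ G.Adj u v) {x y : V} (hx : x ∈ I) (hxy : G.Adj x y) :
    y ∈ K := by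
  rcases mem_union.mp (hpart ▸ mem_univ y : y ∈ K ∪ I) with hyK | hyI
  · exact hyK
  · exact absurd hxy (hI x hx y hyI hxy.ne)

theorem exists_mem_clique_eq_or_adj [DecidableRel G.Adj] (hpart : K ∪ I = univ)
    (hI : ∀ u ∈ I, ∀ v ∈ I, u ≠ v → ¬ G.Adj u v) {x : V} (hx : x ∉ S)
    (hN : ¬ G.neighborFinset x ⊆ S) : ∃ a ∈ K, a ∉ S ∧ (x = a ∨ G.Adj x a) := by
  rcases mem_union.mp (hpart ▸ mem_univ x : x ∈ K ∪ I) with hxK | hxI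
  · exact ⟨x, hxK, hx, .inl rfl⟩
  · obtain ⟨a, ha, haS⟩ := not_subset.mp hN
    rw [mem_neighborFinset] at ha
    exact ⟨a, mem_of_adj_of_mem_independent hpart hI hxI ha, haS, .inr ha⟩

theorem IsSeparator.neighborFinset_subset_or_of_split [DecidableRel G.Adj]
    (hpart : K ∪ I = univ) (hK : G.IsClique (↑K : Set V))
    (hI : ∀ u ∈ I, ∀ v ∈ I, u ≠ v → ¬ G.Adj u v) (hS : G.IsSeparator u v S) : G.neighborFinset u ⊆ S ∨ G.neighborFinset v ⊆ S := by
  by_contra! h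
  obtain ⟨a, haK, haS, hua⟩ := exists_mem_clique_eq_or_adj hpart hI hS.1 h.1
  obtain ⟨b, hbK, hbS, hvb⟩ := exists_mem_clique_eq_or_adj hpart hI hS.2.1 h.2
  exact hS.not_eq_or_adj haS hbS hua hvb ((eq_or_ne a b).imp_right (hK haK hbK))

end SimpleGraph

theorem split_minSeparator_eq_neighborhood_general (G : SimpleGraph V) [DecidableRel G.Adj]
    (K I : Finset V) (hpart : K ∪ I = Finset.univ)
    (hK : G.IsClique (↑K : Set V))
    (hI : ∀ u ∈ I, ∀ v ∈ I, u ≠ v → ¬ G.Adj u v)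
    (u v : V)
    (S : Finset V) (hS : G.IsMinSeparator u v S) :
    S = G.neighborFinset u ∨ S = G.neighborFinset v := by
  rcases hS.1.neighborFinset_subset_or_of_split hpart hK hI with h | h
  · exact .inl (hS.2 _ h hS.1.neighborFinset_left).symm
  · exact .inr (hS.2 _ h hS.1.neighborFinset_right).symm

/-- In a connected split graph without universal vertices, with split partition `K ∪ I`,
every minimal `u,v`-separator for a non-adjacent pair `u ≠ v` equals `N(u)` or `N(v)`. -/
theorem split_minSeparator_eq_neighborhood (G : SimpleGraph V) [DecidableRel G.Adj]
    (hconn : G.Connected) (K I : Finset V) (hpart : K ∪ I = Finset.univ)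
    (hdisj : Disjoint K I) (hK : G.IsClique (↑K : Set V))
    (hI : ∀ u ∈ I, ∀ v ∈ I, u ≠ v → ¬ G.Adj u v)
    (huniv : ∀ v : V, ¬ G.IsUniversalVtx v)
    (u v : V) (huv : u ≠ v) (hadj : ¬ G.Adj u v)
    (S : Finset V) (hS : G.IsMinSeparator u v S) :
    S = G.neighborFinset u ∨ S = G.neighborFinset v :=
  split_minSeparator_eq_neighborhood_general G K I hpart hK hI u v S hS
end

section
/- If the cutset hypergraph of a graph G is 1-Sperner (i.e., any two distinct minimal cutsets S, S' of G satisfy min(|S \ S'|, |S' \ S|) = 1), then G is connected-domishold. -/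
open SimpleGraph Finset BigOperators

variable {V : Type*} [Fintype V] [DecidableEq V]

/-!
A set `D` is connected dominating iff it is nonempty and its complement contains no minimal
cutset, so it suffices to separate the sets containing a minimal cutset from the others by a
weight threshold; this holds for every 1-Sperner hypergraph `H`.

Let `e₀` be a smallest edge of `H` and `z ∈ e₀` a vertex maximising the size of the smallest edge
avoiding it. Then every edge `e ∋ z` satisfies `e \ {z} ⊆ f` for every edge `f ∌ z`: otherwise
the 1-Sperner exchange property, applied to `e₀`, `e`, `f` and a smallest edge avoiding a vertex
of `e₀ \ e`, produces two nested edges. Hence, with `V₁` the common part of the edges avoiding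
`z`, a set `X` contains an edge iff either `z ∈ X` and `X ∩ V₁` contains an edge of the link of
`z`, or `V₁ ⊆ X` and `X` contains an edge of the trace `{f \ V₁ | z ∉ f}`. Both are 1-Sperner
hypergraphs on fewer vertices, and threshold weights for them combine linearly into weights
for `H`.
-/

section Hypergraph

variable {α : Type*}

def HypCovers (H : Finset α → Prop) (X : Finset α) : Prop :=
  ∃ e, H e ∧ e ⊆ X

/-- Margin one loses no generality: a threshold separation of finitely many sets rescales to it. -/
structure IsGapThreshold (P : Finset α → Prop) (w : α → ℝ) (θ : ℝ) : Prop where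
  nonneg : ∀ v, 0 ≤ w v
  add_one_le_sum : ∀ X, P X → θ + 1 ≤ ∑ v ∈ X, w v
  sum_le : ∀ X, ¬ P X → ∑ v ∈ X, w v ≤ θ

theorem IsGapThreshold.sum_mono {P : Finset α → Prop} {w : α → ℝ} {θ : ℝ}
    (h : IsGapThreshold P w θ) {X Y : Finset α} (hXY : X ⊆ Y) : ∑ v ∈ X, w v ≤ ∑ v ∈ Y, w v :=
  sum_le_sum_of_subset_of_nonneg hXY fun v _ _ => h.nonneg v

variable [DecidableEq α]

def hypLink (H : Finset α → Prop) (S : Finset α) (e' : Finset α) : Prop :=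
  ∃ e, H e ∧ S ⊆ e ∧ e' = e \ S

variable {H : Finset α → Prop}

namespace HypOneSperner

theorem mono {H' : Finset α → Prop} (h : HypOneSperner H) (hH' : ∀ e, H' e → H e) :
    HypOneSperner H' :=
  fun e f he hf hef => h e f (hH' e he) (hH' f hf) hef

theorem link (h : HypOneSperner H) (S : Finset α) : HypOneSperner (hypLink H S) := by
  rintro _ _ ⟨e, he, hSe, rfl⟩ ⟨f, hf, hSf, rfl⟩ hef
  rw [sdiff_sdiff_sdiff_cancel_right hSf, sdiff_sdiff_sdiff_cancel_right hSe]
  exact h e f he hf (by rintro rfl; exact hef rfl)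

theorem eq_of_subset (h : HypOneSperner H) {e f : Finset α} (he : H e) (hf : H f)
    (hef : e ⊆ f) : e = f := by
  by_contra hne
  have := h e f he hf hne
  simp [Finset.sdiff_eq_empty_iff_subset.mpr hef] at this

theorem erase_subset (h : HypOneSperner H) {e f : Finset α} (he : H e) (hf : H f)
    (hcard : e.card ≤ f.card) {x : α} (hxe : x ∈ e) (hxf : x ∉ f) : e.erase x ⊆ f := by
  have hone : (e \ f).card = 1 := by
    have := h e f he hf (by rintro rfl; exact hxf hxe)
    rwa [min_eq_left (Finset.card_sdiff_le_card_sdiff_iff.mpr hcard)] at this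
  intro v hv
  obtain ⟨hvx, hve⟩ := Finset.mem_erase.mp hv
  by_contra hvf
  exact hvx (Finset.card_le_one.mp hone.le v (Finset.mem_sdiff.mpr ⟨hve, hvf⟩) x
    (Finset.mem_sdiff.mpr ⟨hxe, hxf⟩))

theorem exists_erase_subset [Fintype α] (h : HypOneSperner H)
    (hne : ∃ e, H e ∧ e.Nonempty) :
    ∃ z, (∃ e, H e ∧ z ∈ e) ∧ ∀ e f, H e → H f → z ∈ e → z ∉ f → e.erase z ⊆ f := by
  classical
  obtain ⟨e₁, he₁, he₁ne⟩ := hne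
  obtain ⟨e₀, he₀, hmin⟩ := (univ.filter H).exists_min_image card ⟨e₁, by simpa using he₁⟩
  simp only [Finset.mem_filter, Finset.mem_univ, true_and] at he₀ hmin
  have he₀ne : e₀.Nonempty := by
    rw [Finset.nonempty_iff_ne_empty]
    rintro rfl
    exact he₁ne.ne_empty (h.eq_of_subset he₀ he₁ (Finset.empty_subset _)).symm
  -- the least size of an edge avoiding `v`, or `⊤` if `v` lies in every edge
  let b : α → WithTop ℕ := fun v =>
    (univ.filter fun f => H f ∧ v ∉ f).inf fun f => (f.card : WithTop ℕ)
  obtain ⟨z, hz, hzmax⟩ := e₀.exists_max_image b he₀ne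
  refine ⟨z, ⟨e₀, he₀, hz⟩, ?_⟩
  suffices hcard : ∀ e f, H e → H f → z ∈ e → z ∉ f → e.card ≤ f.card from
    fun e f he hf hze hzf => h.erase_subset he hf (hcard e f he hf hze hzf) hze hzf
  intro e f he hf hze hzf
  by_contra! hlt
  obtain ⟨y, hye₀, hye⟩ : ∃ y ∈ e₀, y ∉ e := Finset.not_subset.mp fun hsub => by
    have := hmin f hf
    rw [h.eq_of_subset he₀ he hsub] at this
    omega
  have hyz : y ≠ z := fun hyz => hye (hyz ▸ hze)
  obtain ⟨g, ⟨hg, hyg⟩, hgf⟩ : ∃ g, (H g ∧ y ∉ g) ∧ g.card ≤ f.card := by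
    have hbz : b z ≤ f.card := Finset.inf_le (by simp [hf, hzf])
    simpa [b] using (Finset.inf_le_iff (WithTop.coe_lt_top _)).mp ((hzmax y hye₀).trans hbz)
  have hyf : y ∈ f := h.erase_subset he₀ hf (hmin f hf) hz hzf (mem_erase.mpr ⟨hyz, hye₀⟩)
  have hzg : z ∈ g := h.erase_subset he₀ hg (hmin g hg) hye₀ hyg (mem_erase.mpr ⟨hyz.symm, hz⟩)
  have hfe : f.erase y ⊆ e := h.erase_subset hf he hlt.le hyf hye
  have hgf' : g.erase z ⊆ f := h.erase_subset hg hf hgf hzg hzf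
  have hge : g ⊆ e := by
    intro v hv
    by_cases hvz : v = z
    · exact hvz ▸ hze
    · exact hfe (mem_erase.mpr ⟨fun hvy => hyg (hvy ▸ hv), hgf' (mem_erase.mpr ⟨hvz, hv⟩)⟩)
  rw [h.eq_of_subset hg he hge] at hgf
  omega

end HypOneSperner

theorem sum_ite_mem_add_ite_eq (X V₁ : Finset α) (z : α) (w₁ w₂ : α → ℝ) (A γ c : ℝ) :
    ∑ v ∈ X, ((if v ∈ V₁ then A * w₁ v + γ else 0) + w₂ v + if v = z then c else 0) =
      A * ∑ v ∈ X ∩ V₁, w₁ v + (X ∩ V₁).card * γ + ∑ v ∈ X, w₂ v + if z ∈ X then c else 0 := by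
  rw [sum_add_distrib, sum_add_distrib, sum_ite_mem, sum_add_distrib, ← mul_sum, sum_const,
    nsmul_eq_mul, sum_ite_eq']

theorem IsGapThreshold.glue [Fintype α] {P P₁ P₂ : Finset α → Prop} {w₁ w₂ : α → ℝ}
    {θ₁ θ₂ : ℝ} (h₁ : IsGapThreshold P₁ w₁ θ₁) (h₂ : IsGapThreshold P₂ w₂ θ₂) {z : α}
    {V₁ : Finset α} (hV₁ : P₁ V₁) (hP : ∀ X, P X ↔ (z ∈ X ∧ P₁ (X ∩ V₁)) ∨ (V₁ ⊆ X ∧ P₂ X)) :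
    ∃ w θ, IsGapThreshold P w θ := by
  set T₁ := ∑ v ∈ V₁, w₁ v
  set T₂ := ∑ v, w₂ v
  set n : ℝ := (V₁.card : ℝ) with hn
  set γ := max (T₂ - θ₂) 0
  set A := γ * n + T₂ + 1
  set c := A * (T₁ - θ₁) + γ - T₂ + θ₂
  have hT₂ : 0 ≤ T₂ := sum_nonneg fun v _ => h₂.nonneg v
  have hθ₁ : θ₁ + 1 ≤ T₁ := h₁.add_one_le_sum V₁ hV₁
  have hγ : T₂ - θ₂ ≤ γ := le_max_left _ _
  have hγ₀ : 0 ≤ γ := le_max_right _ _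
  have hA : 0 ≤ A := by positivity
  have hc : 0 ≤ c := by nlinarith
  -- `γ` charges each missing vertex of `V₁` at least the whole slack of `w₂`, `A` makes one unit of
  -- `w₁` outweigh all `γ`- and `w₂`-terms, and `c` is the largest weight of `z` that keeps the
  -- non-`P` sets containing `z` below the threshold.
  refine ⟨fun v => (if v ∈ V₁ then A * w₁ v + γ else 0) + w₂ v + if v = z then c else 0,
    A * T₁ + γ * n + θ₂, ⟨fun v => ?_, fun X hX => ?_, fun X hX => ?_⟩⟩
  · have := h₁.nonneg v
    have := h₂.nonneg v
    split_ifs <;> positivity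
  all_goals
    rw [sum_ite_mem_add_ite_eq]
    have hw₁T : ∑ v ∈ X ∩ V₁, w₁ v ≤ T₁ := h₁.sum_mono inter_subset_right
    have hw₂₀ : 0 ≤ ∑ v ∈ X, w₂ v := sum_nonneg fun v _ => h₂.nonneg v
    have hw₂T : ∑ v ∈ X, w₂ v ≤ T₂ := h₂.sum_mono (subset_univ X)
  · rcases (hP X).mp hX with ⟨hzX, hX₁⟩ | ⟨hV₁X, hX₂⟩
    · have := mul_le_mul_of_nonneg_left (h₁.add_one_le_sum _ hX₁) hA
      have : 0 ≤ ((X ∩ V₁).card : ℝ) * γ := by positivity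
      rw [if_pos hzX]
      linarith
    · rw [inter_eq_right.mpr hV₁X]
      have := h₂.add_one_le_sum X hX₂
      split_ifs <;> linarith
  · simp only [hP, not_or, not_and] at hX
    by_cases hV₁X : V₁ ⊆ X
    · have hzX : z ∉ X := fun hzX => hX.1 hzX (by rwa [inter_eq_right.mpr hV₁X])
      rw [inter_eq_right.mpr hV₁X, if_neg hzX]
      have := h₂.sum_le X (hX.2 hV₁X)
      linarith
    · have hk : ((X ∩ V₁).card : ℝ) + 1 ≤ n := by
        rw [hn]
        exact_mod_cast card_lt_card (inter_subset_right.ssubset_of_ne (mt inter_eq_right.mp hV₁X))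
      have := mul_le_mul_of_nonneg_right hk hγ₀
      have := mul_le_mul_of_nonneg_left hw₁T hA
      split_ifs with hzX
      · have := mul_le_mul_of_nonneg_left (h₁.sum_le _ (hX.1 hzX)) hA
        linarith
      · linarith

theorem HypOneSperner.exists_isGapThreshold_of_subset [Fintype α] {U : Finset α}
    (h : HypOneSperner H) (hU : ∀ e, H e → e ⊆ U) : ∃ w θ, IsGapThreshold (HypCovers H) w θ := by
  classical
  induction U using Finset.strongInduction generalizing H with | H U ih => ?_
  by_cases hne : ∃ e, H e ∧ e.Nonempty
  swap
  · refine ⟨0, if H ∅ then -1 else 0, ⟨fun _ => le_rfl, fun X ⟨e, he, _⟩ => ?_, fun X hX => ?_⟩⟩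
    · simp only [not_exists, not_and, not_nonempty_iff_eq_empty] at hne
      simp [← hne e he, he]
    · simp [if_neg fun hemp => hX ⟨∅, hemp, empty_subset X⟩]
  obtain ⟨z, ⟨e₀, he₀, hze₀⟩, hsplit⟩ := h.exists_erase_subset hne
  set V₁ := univ.filter fun v => ∀ f, H f → z ∉ f → v ∈ f
  have hV₁ : ∀ e, H e → z ∈ e → e \ {z} ⊆ V₁ := fun e he hze v hv => by
    simpa [V₁] using fun f hf hzf => hsplit e f he hf hze hzf (by simpa [erase_eq] using hv)
  have hlt : U.erase z ⊂ U := erase_ssubset (hU e₀ he₀ hze₀)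
  obtain ⟨w₁, θ₁, h₁⟩ := ih _ hlt (h.link {z}) (by
    rintro _ ⟨e, he, -, rfl⟩
    simpa [← erase_eq] using erase_subset_erase z (hU e he))
  have hAvoid : HypOneSperner (fun f => H f ∧ z ∉ f) := h.mono fun f hf => hf.1
  obtain ⟨w₂, θ₂, h₂⟩ := ih _ hlt (hAvoid.link V₁) (by
    rintro _ ⟨f, ⟨hf, hzf⟩, -, rfl⟩
    exact sdiff_subset.trans (subset_erase.mpr ⟨hU f hf, hzf⟩))
  refine h₁.glue h₂ (z := z) ⟨e₀ \ {z}, ⟨e₀, he₀, by simpa, rfl⟩, hV₁ e₀ he₀ hze₀⟩ fun X => ?_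
  constructor
  · rintro ⟨e, he, heX⟩
    by_cases hze : z ∈ e
    · exact .inl ⟨heX hze, e \ {z}, ⟨e, he, by simpa, rfl⟩,
        subset_inter (sdiff_subset.trans heX) (hV₁ e he hze)⟩
    · have hV₁e : V₁ ⊆ e := fun v hv => (mem_filter.mp hv).2 e he hze
      exact .inr ⟨hV₁e.trans heX, e \ V₁, ⟨e, ⟨he, hze⟩, hV₁e, rfl⟩, sdiff_subset.trans heX⟩
  · rintro (⟨hzX, _, ⟨e, he, -, rfl⟩, heX⟩ | ⟨hV₁X, _, ⟨f, ⟨hf, -⟩, -, rfl⟩, hfX⟩)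
    · refine ⟨e, he, sdiff_le_iff.mp (heX.trans inter_subset_left) |>.trans ?_⟩
      exact union_subset (singleton_subset_iff.mpr hzX) le_rfl
    · exact ⟨f, hf, (sdiff_le_iff.mp hfX).trans (union_subset hV₁X le_rfl)⟩

end Hypergraph

namespace SimpleGraph

section

variable {W : Type*} {G : SimpleGraph W} {D : Finset W}

theorem exists_isMinCutset_subset {S : Finset W} (h : G.IsCutset S) :
    ∃ T ⊆ S, G.IsMinCutset T := by
  obtain ⟨T, hTS, hT⟩ := exists_minimal_le_of_wellFoundedLT G.IsCutset S h
  exact ⟨T, hTS, hT.1, fun S' hS' hcut => le_antisymm hS' (hT.2 hcut hS')⟩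

theorem IsCDSet.nonempty [Nonempty W] (h : G.IsCDSet D) : D.Nonempty := by
  rcases h.1 (Classical.arbitrary W) with hv | ⟨u, hu, -⟩
  exacts [⟨_, hv⟩, ⟨u, hu⟩]

theorem connectedDomishold_of_isEmpty [IsEmpty W] (G : SimpleGraph W) : G.ConnectedDomishold :=
  ⟨0, 0, fun _ => le_rfl, le_rfl, fun S => by simp [IsCDSet]⟩

end

variable {G : SimpleGraph V} {D : Finset V}

theorem IsCDSet.not_isCutset (h : G.IsCDSet D) {S : Finset V} (hSD : S ⊆ Dᶜ) :
    ¬ G.IsCutset S := by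
  rintro ⟨u, v, hu, hv, -, hcut⟩
  have hreach : ∀ x, ∃ d ∈ D, ∃ p : G.Walk d x, ∀ y ∈ p.support, y = x ∨ y ∈ D := fun x => by
    rcases h.1 x with hx | ⟨d, hd, hdx⟩
    · exact ⟨x, hx, .nil, by simp⟩
    · exact ⟨d, hd, .cons hdx .nil, by simp [hd]⟩
  obtain ⟨du, hdu, pu, hpu⟩ := hreach u
  obtain ⟨dv, hdv, pv, hpv⟩ := hreach v
  obtain ⟨p, hp⟩ := h.2 du hdu dv hdv
  obtain ⟨x, hx, hxS⟩ := hcut (pu.reverse.append (p.append pv))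
  have hxD : x ∉ D := mem_compl.mp (hSD hxS)
  simp only [Walk.mem_support_append_iff, Walk.support_reverse, List.mem_reverse] at hx
  rcases hx with hx | hx | hx
  · exact (hpu x hx).elim (fun hxu => hu (hxu ▸ hxS)) hxD
  · exact hxD (hp x hx)
  · exact (hpv x hx).elim (fun hxv => hv (hxv ▸ hxS)) hxD

theorem isCDSet_of_forall_not_isCutset (hD : D.Nonempty) (h : ∀ S ⊆ Dᶜ, ¬ G.IsCutset S) :
    G.IsCDSet D := by
  classical
  refine ⟨fun v => ?_, fun u hu v hv => ?_⟩
  · by_contra! hvD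
    obtain ⟨u, hu⟩ := hD
    have hvu : v ≠ u := fun hvu => hvD.1 (hvu ▸ hu)
    -- the neighbourhood of `v` would separate `v` from `u`
    refine h (univ.filter (G.Adj v)) (fun x hx => mem_compl.mpr fun hxD =>
      hvD.2 x hxD (G.adj_symm (mem_filter.mp hx).2)) ⟨v, u, by simp, ?_, hvu, fun p => ?_⟩
    · simpa using fun hvu' => hvD.2 u hu hvu'.symm
    · cases p with
      | nil => exact absurd rfl hvu
      | cons hadj q => exact ⟨_, List.mem_cons_of_mem _ q.start_mem_support, by simpa using hadj⟩
  · by_cases huv : u = v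
    · subst huv
      exact ⟨.nil, by simpa using hu⟩
    by_contra! hwalk
    exact h Dᶜ subset_rfl ⟨u, v, by simpa using hu, by simpa using hv, huv,
      fun p => by simpa using hwalk p⟩

theorem isCDSet_iff [Nonempty V] : G.IsCDSet D ↔ D.Nonempty ∧ ¬ HypCovers G.IsMinCutset Dᶜ := by
  refine ⟨fun h => ⟨h.nonempty, fun ⟨S, hS, hSD⟩ => h.not_isCutset hSD hS.1⟩, ?_⟩
  rintro ⟨hD, hcov⟩
  refine isCDSet_of_forall_not_isCutset hD fun S hSD hcut => ?_
  obtain ⟨T, hTS, hT⟩ := exists_isMinCutset_subset hcut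
  exact hcov ⟨T, hT, hTS.trans hSD⟩

theorem connectedDomishold_of_forall_not_isMinCutset [Nonempty V]
    (h : ∀ S, ¬ G.IsMinCutset S) : G.ConnectedDomishold := by
  refine ⟨1, 1, fun _ => zero_le_one, zero_le_one, fun D => ?_⟩
  simp [isCDSet_iff, HypCovers, h, Nat.one_le_iff_ne_zero, nonempty_iff_ne_empty]

theorem connectedDomishold_of_isGapThreshold [Nonempty V] {S : Finset V} (hS : G.IsMinCutset S)
    {w : V → ℝ} {θ : ℝ} (hw : IsGapThreshold (HypCovers G.IsMinCutset) w θ) :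
    G.ConnectedDomishold := by
  have hcov_univ : HypCovers G.IsMinCutset univ := ⟨S, hS, subset_univ S⟩
  have hθ := hw.add_one_le_sum univ hcov_univ
  refine ⟨w, ∑ v, w v - θ - 1 / 2, hw.nonneg, by linarith, fun D => ?_⟩
  have hsplit := sum_add_sum_compl D w
  rw [isCDSet_iff]
  constructor
  · intro hD
    have hcov : ¬ HypCovers G.IsMinCutset Dᶜ := fun hcov => by
      have := hw.add_one_le_sum _ hcov
      linarith
    refine ⟨nonempty_iff_ne_empty.mpr ?_, hcov⟩
    rintro rfl
    exact hcov (by simpa using hcov_univ)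
  · rintro ⟨-, hcov⟩
    have := hw.sum_le _ hcov
    linarith

end SimpleGraph

/-- If the cutset hypergraph of `G` is 1-Sperner, then `G` is connected-domishold. -/
theorem oneSperner_cutsetHypergraph_connectedDomishold (G : SimpleGraph V)
    (h : HypOneSperner (G.IsMinCutset)) : G.ConnectedDomishold := by
  rcases isEmpty_or_nonempty V with hV | hV
  · exact G.connectedDomishold_of_isEmpty
  by_cases hcut : ∃ S, G.IsMinCutset S
  · obtain ⟨S, hS⟩ := hcut
    obtain ⟨w, θ, hw⟩ := h.exists_isGapThreshold_of_subset (U := univ) fun e _ => subset_univ e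
    exact connectedDomishold_of_isGapThreshold hS hw
  · exact connectedDomishold_of_forall_not_isMinCutset (not_exists.mp hcut)
end

section
/- If a graph G is connected-domishold, then its cutset hypergraph is 2-asummable: there do not exist sets A_1, A_2 each containing a minimal cutset of G and sets B_1, B_2 each containing no minimal cutset of G such that every vertex belongs to exactly as many A_i's as B_i's. -/
open SimpleGraph Finset BigOperators

variable {V : Type*} [Fintype V] [DecidableEq V]

set_option linter.unusedSectionVars false

lemma cutset_subset_min (G : SimpleGraph V) {C : Finset V} (hC : G.IsCutset C) :
    ∃ C' ⊆ C, G.IsMinCutset C' := by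
  classical
  have hne : (C.powerset.filter (fun D => G.IsCutset D)).Nonempty :=
    ⟨C, by simp [hC]⟩
  obtain ⟨C₀, hC₀mem, hmin⟩ := Finset.exists_min_image _ Finset.card hne
  simp only [Finset.mem_filter, Finset.mem_powerset] at hC₀mem
  refine ⟨C₀, hC₀mem.1, hC₀mem.2, ?_⟩
  intro D hD hDcut
  have hle : C₀.card ≤ D.card := hmin D (by
    simp only [Finset.mem_filter, Finset.mem_powerset]
    exact ⟨hD.trans hC₀mem.1, hDcut⟩)
  exact Finset.eq_of_subset_of_card_le hD hle

lemma crossing {G : SimpleGraph V} {S : Finset V} :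
    ∀ {a b : V} (p : G.Walk a b), a ∈ S → b ∉ S →
      ∃ x y, G.Adj x y ∧ y ∈ p.support ∧ x ∈ S ∧ y ∉ S := by
  intro a b p
  induction p with
  | nil => intro ha hb; exact absurd ha hb
  | @cons u c b h q ih =>
    intro ha hb
    by_cases hc : c ∈ S
    · obtain ⟨x, y, hxy, hy, hxS, hyS⟩ := ih hc hb
      exact ⟨x, y, hxy, by simp [Walk.support_cons, hy], hxS, hyS⟩
    · exact ⟨u, c, h, by simp [Walk.support_cons, Walk.start_mem_support], ha, hc⟩

lemma not_cd_of_cutset (G : SimpleGraph V) {C A : Finset V} (hC : G.IsCutset C)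
    (hCA : C ⊆ A) : ¬ G.IsCDSet Aᶜ := by
  rintro ⟨hdom, hconn⟩
  obtain ⟨u, v, huC, hvC, huv, hcut⟩ := hC
  have Hu : ∃ u₀ ∈ Aᶜ, ∃ p : G.Walk u u₀, ∀ x ∈ p.support, x = u ∨ x ∈ Aᶜ := by
    rcases hdom u with h | ⟨u', hu', hadj⟩
    · exact ⟨u, h, Walk.nil, by simp⟩
    · refine ⟨u', hu', hadj.symm.toWalk, ?_⟩
      intro x hx
      simp only [Adj.toWalk, Walk.support_cons, Walk.support_nil, List.mem_cons,
        List.mem_singleton, List.not_mem_nil, or_false] at hx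
      rcases hx with rfl | rfl
      · exact Or.inl rfl
      · exact Or.inr hu'
  have Hv : ∃ v₀ ∈ Aᶜ, ∃ p : G.Walk v₀ v, ∀ x ∈ p.support, x = v ∨ x ∈ Aᶜ := by
    rcases hdom v with h | ⟨v', hv', hadj⟩
    · exact ⟨v, h, Walk.nil, by simp⟩
    · refine ⟨v', hv', hadj.toWalk, ?_⟩
      intro x hx
      simp only [Adj.toWalk, Walk.support_cons, Walk.support_nil, List.mem_cons,
        List.mem_singleton, List.not_mem_nil, or_false] at hx
      rcases hx with rfl | rfl
      · exact Or.inr hv'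
      · exact Or.inl rfl
  obtain ⟨u₀, hu₀, p₁, hp₁⟩ := Hu
  obtain ⟨v₀, hv₀, p₂, hp₂⟩ := Hv
  obtain ⟨q, hq⟩ := hconn u₀ hu₀ v₀ hv₀
  obtain ⟨x, hx, hxC⟩ := hcut (p₁.append (q.append p₂))
  have hxnot : x ∉ Aᶜ := by simpa using hCA hxC
  rw [Walk.mem_support_append_iff, Walk.mem_support_append_iff] at hx
  rcases hx with h1 | h2 | h3
  · rcases hp₁ x h1 with rfl | hmem
    · exact huC hxC
    · exact hxnot hmem
  · exact hxnot (hq x h2)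
  · rcases hp₂ x h3 with rfl | hmem
    · exact hvC hxC
    · exact hxnot hmem

lemma cd_compl_of_no_cutset (G : SimpleGraph V) {B : Finset V}
    (hB : ∀ C ⊆ B, ¬ G.IsCutset C) (hne : ∃ x, x ∉ B) : G.IsCDSet Bᶜ := by
  classical
  obtain ⟨u₀, hu₀⟩ := hne
  constructor
  · intro v
    by_cases hv : v ∈ B
    swap
    · exact Or.inl (Finset.mem_compl.mpr hv)
    by_contra hcon
    push_neg at hcon
    obtain ⟨hv1, hv2⟩ := hcon
    apply hB (B.erase v) (Finset.erase_subset _ _)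
    refine ⟨u₀, v, ?_, ?_, ?_, ?_⟩
    · intro hmem; exact hu₀ (Finset.mem_of_mem_erase hmem)
    · simp
    · intro heq; subst heq; exact hu₀ hv
    · intro p
      obtain ⟨x, y, hxy, hy, hxS, hyS⟩ :=
        crossing p (Finset.mem_compl.mpr hu₀) (by simp [hv])
      have hyB : y ∈ B := by simpa using hyS
      have hyv : y ≠ v := by rintro rfl; exact hv2 x hxS hxy
      exact ⟨y, hy, Finset.mem_erase.mpr ⟨hyv, hyB⟩⟩
  · intro u hu v hv
    by_contra hcon
    push_neg at hcon
    apply hB B (Finset.Subset.refl B)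
    refine ⟨u, v, by simpa using hu, by simpa using hv, ?_, ?_⟩
    · rintro rfl
      obtain ⟨x, hx, hxB⟩ := hcon Walk.nil
      simp only [Walk.support_nil, List.mem_singleton] at hx
      subst hx
      exact hxB hu
    · intro p
      obtain ⟨x, hx, hxB⟩ := hcon p
      exact ⟨x, hx, by simpa using hxB⟩

/-- If `G` is connected-domishold, then its cutset hypergraph is 2-asummable. -/
theorem connectedDomishold_cutsetHypergraph_two_asummable (G : SimpleGraph V)
    (h : G.ConnectedDomishold) : ¬ HypTwoSummable (G.IsMinCutset) := by
  classical
  obtain ⟨w, t, hw0, ht0, hiff⟩ := h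
  rintro ⟨A₁, A₂, B₁, B₂, ⟨e₁, he₁, he₁A⟩, ⟨e₂, he₂, he₂A⟩, hB₁, hB₂, hsum⟩
  have hA₁ : ¬ G.IsCDSet A₁ᶜ := not_cd_of_cutset G he₁.1 he₁A
  have hA₂ : ¬ G.IsCDSet A₂ᶜ := not_cd_of_cutset G he₂.1 he₂A
  have hnoB : ∀ (B : Finset V), (∀ e, G.IsMinCutset e → ¬ e ⊆ B) → G.IsCDSet Bᶜ := by
    intro B hB
    apply cd_compl_of_no_cutset
    · intro C hCB hCcut
      obtain ⟨C', hC'C, hC'⟩ := cutset_subset_min G hCcut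
      exact hB C' hC' (hC'C.trans hCB)
    · by_contra hcon
      push_neg at hcon
      exact hB e₁ he₁ (fun x _ => hcon x)
  have hB₁' := hnoB B₁ hB₁
  have hB₂' := hnoB B₂ hB₂
  have h1 : ∑ x ∈ A₁ᶜ, w x < t := by
    by_contra hc; push_neg at hc; exact hA₁ ((hiff _).mp hc)
  have h2 : ∑ x ∈ A₂ᶜ, w x < t := by
    by_contra hc; push_neg at hc; exact hA₂ ((hiff _).mp hc)
  have h3 : t ≤ ∑ x ∈ B₁ᶜ, w x := (hiff _).mpr hB₁'
  have h4 : t ≤ ∑ x ∈ B₂ᶜ, w x := (hiff _).mpr hB₂'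
  have key : ∑ x ∈ A₁ᶜ, w x + ∑ x ∈ A₂ᶜ, w x
      = ∑ x ∈ B₁ᶜ, w x + ∑ x ∈ B₂ᶜ, w x := by
    have e : ∀ (X : Finset V), ∑ x ∈ Xᶜ, w x = ∑ v : V, (if v ∈ Xᶜ then w v else 0) := by
      intro X
      rw [Finset.sum_ite_mem, Finset.univ_inter]
    rw [e, e, e, e, ← Finset.sum_add_distrib, ← Finset.sum_add_distrib]
    apply Finset.sum_congr rfl
    intro v _
    have hv := hsum v
    by_cases hm1 : v ∈ A₁ <;> by_cases hm2 : v ∈ A₂ <;>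
      by_cases hm3 : v ∈ B₁ <;> by_cases hm4 : v ∈ B₂ <;>
      simp_all [Finset.mem_compl]
  linarith
end

section
/- For every cycle C_k with k ≥ 4, the cutset hypergraph of C_k is 2-summable; consequently C_k is not connected-domishold. -/
open SimpleGraph Finset BigOperators

variable {V : Type*} [Fintype V] [DecidableEq V]

/-! In `C_k` the neighbourhoods `{0, 2}` and `{1, 3}` of the vertices `1` and `2` are minimal
cutsets, whereas the pairs of adjacent vertices `{0, 1}` and `{2, 3}` contain no cutset, since
deleting an arc of a cycle leaves a path; both pairs of sets cover `{0, 1, 2, 3}` exactly once.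

For a connected-domishold graph with weights `w` and threshold `t`, the complement of a set
containing a cutset `e` is not a connected dominating set (otherwise it would connect `G - e`), and
the complement of a set `B` containing no cutset is one (a vertex of `B` without neighbours outside
`B` would make its neighbourhood a cutset inside `B`). Hence the complements of `A₁, A₂` weigh
less than `t` and those of `B₁, B₂` at least `t`, which is impossible when `A₁, A₂` and `B₁, B₂`
cover every vertex equally often. -/

open scoped Fin.NatCast Fin.CommRing

namespace SimpleGraph

section Cutsets

variable {α : Type*} {G : SimpleGraph α} {S A B D e : Finset α}

theorem isCutset_of_forall_adj_mem {u v : α} (hu : u ∉ S) (hv : v ∉ S) (huv : u ≠ v)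
    (hS : ∀ x, G.Adj u x → x ∈ S) : G.IsCutset S :=
  ⟨u, v, hu, hv, huv, fun p =>
    ⟨p.snd, p.getVert_mem_support 1, hS _ (p.adj_snd (Walk.not_nil_of_ne huv))⟩⟩

theorem IsCutset.exists_isMinCutset_subset (hS : G.IsCutset S) : ∃ e ⊆ S, G.IsMinCutset e := by
  classical
  obtain ⟨e, he, hmin⟩ :=
    Finset.exists_minimal (s := S.powerset.filter G.IsCutset) ⟨S, by simpa using hS⟩
  rw [mem_filter, mem_powerset] at he
  refine ⟨e, he.1, he.2, fun S' hS'e hS' => subset_antisymm hS'e ?_⟩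
  exact hmin (by simpa using ⟨hS'e.trans he.1, hS'⟩) hS'e

theorem IsCDSet.not_isCutset_of_disjoint (hD : G.IsCDSet D) (hDe : Disjoint D e) :
    ¬ G.IsCutset e := by
  obtain ⟨hdom, hconn⟩ := hD
  have reach : ∀ u ∉ e, ∃ d ∈ D, ∃ p : G.Walk u d, ∀ x ∈ p.support, x ∉ e := by
    intro u hu
    rcases hdom u with huD | ⟨d, hd, hdu⟩
    · exact ⟨u, huD, Walk.nil, by simpa using hu⟩
    · refine ⟨d, hd, Walk.cons hdu.symm Walk.nil, ?_⟩
      simpa using ⟨hu, Finset.disjoint_left.1 hDe hd⟩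
  rintro ⟨u, v, hu, hv, -, hsep⟩
  obtain ⟨d, hd, p, hp⟩ := reach u hu
  obtain ⟨d', hd', q, hq⟩ := reach v hv
  obtain ⟨r, hr⟩ := hconn d hd d' hd'
  obtain ⟨x, hx, hxe⟩ := hsep (p.append (r.append q.reverse))
  simp only [Walk.mem_support_append_iff, Walk.support_reverse, List.mem_reverse] at hx
  rcases hx with hx | hx | hx
  exacts [hp x hx hxe, Finset.disjoint_left.1 hDe (hr x hx) hxe, hq x hx hxe]

theorem not_isCDSet_sdiff_of_isCutset [Fintype α] [DecidableEq α] (he : G.IsCutset e)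
    (heA : e ⊆ A) : ¬ G.IsCDSet (univ \ A) := fun hD =>
  hD.not_isCutset_of_disjoint (sdiff_disjoint.mono_right heA) he

theorem isCDSet_sdiff_of_forall_not_isCutset [Fintype α] [DecidableEq α] {x : α} (hx : x ∉ B)
    (hB : ∀ S ⊆ B, ¬ G.IsCutset S) : G.IsCDSet (univ \ B) := by
  refine ⟨fun v => ?_, fun u hu w hw => ?_⟩
  · by_cases hvB : v ∈ B
    · right
      by_contra! hN
      -- otherwise all neighbours of `v` lie in `B`, and they separate `v` from `x`
      refine hB (B.erase v) (erase_subset v B) (isCutset_of_forall_adj_mem (u := v) (v := x)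
        (notMem_erase v B) (fun h => hx (mem_of_mem_erase h)) (by rintro rfl; exact hx hvB)
        fun y hy => mem_erase.2 ⟨hy.ne.symm, ?_⟩)
      by_contra hyB
      exact hN y (by simpa using hyB) hy.symm
    · exact Or.inl (by simpa using hvB)
  · rw [mem_sdiff] at hu hw
    by_cases huw : u = w
    · subst huw
      exact ⟨Walk.nil, by simpa using hu.2⟩
    · have hsep := hB B subset_rfl
      simp only [IsCutset, not_exists, not_and, not_forall] at hsep
      obtain ⟨p, hp⟩ := hsep u w hu.2 hw.2 huw
      exact ⟨p, fun y hy => mem_sdiff.2 ⟨mem_univ y, hp y hy⟩⟩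

theorem sum_add_sum_eq_of_count [Fintype α] [DecidableEq α] {M : Type*} [AddCommMonoid M]
    (w : α → M) {A₁ A₂ B₁ B₂ : Finset α}
    (h : ∀ v : α, ((if v ∈ A₁ then 1 else 0) + (if v ∈ A₂ then 1 else 0) : ℕ)
           = (if v ∈ B₁ then 1 else 0) + (if v ∈ B₂ then 1 else 0)) :
    ∑ x ∈ A₁, w x + ∑ x ∈ A₂, w x = ∑ x ∈ B₁, w x + ∑ x ∈ B₂, w x := by
  have hsum : ∀ A : Finset α, ∑ x ∈ A, w x = ∑ x, (if x ∈ A then 1 else 0 : ℕ) • w x := by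
    intro A
    simp [ite_smul, Finset.sum_ite_mem]
  simp only [hsum, ← sum_add_distrib, ← add_smul, h]

theorem ConnectedDomishold.not_hypTwoSummable [Fintype α] [DecidableEq α]
    (hG : G.ConnectedDomishold) : ¬ HypTwoSummable G.IsMinCutset := by
  rintro ⟨A₁, A₂, B₁, B₂, ⟨e₁, he₁, he₁A⟩, ⟨e₂, he₂, he₂A⟩, hB₁, hB₂, hcount⟩
  obtain ⟨w, t, -, -, hw⟩ := hG
  have isCDSet_of_free : ∀ B : Finset α, (∀ e, G.IsMinCutset e → ¬ e ⊆ B) →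
      G.IsCDSet (univ \ B) := by
    intro B hB
    have hfree : ∀ S ⊆ B, ¬ G.IsCutset S := fun S hSB hS =>
      let ⟨e, heS, he⟩ := hS.exists_isMinCutset_subset
      hB e he (heS.trans hSB)
    obtain ⟨x, hx⟩ : ∃ x, x ∉ B := by
      by_contra! h
      exact hfree e₁ (fun y _ => h y) he₁.1
    exact isCDSet_sdiff_of_forall_not_isCutset hx hfree
  have h₁ : ∑ x ∈ univ \ A₁, w x < t :=
    lt_of_not_ge fun h => not_isCDSet_sdiff_of_isCutset he₁.1 he₁A ((hw _).1 h)
  have h₂ : ∑ x ∈ univ \ A₂, w x < t :=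
    lt_of_not_ge fun h => not_isCDSet_sdiff_of_isCutset he₂.1 he₂A ((hw _).1 h)
  have h₃ : t ≤ ∑ x ∈ univ \ B₁, w x := (hw _).2 (isCDSet_of_free B₁ hB₁)
  have h₄ : t ≤ ∑ x ∈ univ \ B₂, w x := (hw _).2 (isCDSet_of_free B₂ hB₂)
  have hAB := sum_add_sum_eq_of_count w hcount
  simp only [sum_sdiff_eq_sub (subset_univ _)] at h₁ h₂ h₃ h₄
  linarith

end Cutsets

end SimpleGraph

namespace Fin

variable {n : ℕ} {a x : Fin (n + 2)}

theorem val_sub_lt_one_iff : (x - a).val < 1 ↔ x = a := by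
  rw [Nat.lt_one_iff, Fin.val_eq_zero_iff, sub_eq_zero]

theorem val_sub_lt_two_iff : (x - a).val < 2 ↔ x = a ∨ x = a + 1 := by
  rw [Nat.lt_succ_iff_lt_or_eq, val_sub_lt_one_iff, ← sub_eq_iff_eq_add', Fin.ext_iff (a := x - a),
    Fin.val_one]

end Fin

namespace SimpleGraph

theorem Preconnected.exists_walk_support_subset_range {β γ : Type*} {H : SimpleGraph β}
    {G : SimpleGraph γ} (hH : H.Preconnected) (φ : H →g G) (a b : β) :
    ∃ p : G.Walk (φ a) (φ b), ∀ x ∈ p.support, x ∈ Set.range φ :=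
  ⟨(hH a b).some.map φ, by simp [Walk.support_map]⟩

section Cycle

variable {n : ℕ}

theorem cycleGraph_exists_walk_of_le_val_sub (a u v : Fin (n + 2)) {l : ℕ}
    (hu : l ≤ (u - a).val) (hv : l ≤ (v - a).val) :
    ∃ p : (cycleGraph (n + 2)).Walk u v, ∀ x ∈ p.support, l ≤ (x - a).val := by
  let φ : pathGraph (n + 2 - l) →g cycleGraph (n + 2) :=
    ⟨fun i => a + ((l + i.val : ℕ) : Fin (n + 2)), fun {i j} h => by
      rw [cycleGraph_adj, add_sub_add_left_eq_sub, add_sub_add_left_eq_sub]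
      rcases pathGraph_adj.1 h with h | h
      · right; rw [← h]; push_cast; ring
      · left; rw [← h]; push_cast; ring⟩
  have hφ : ∀ y : Fin (n + 2), l ≤ (y - a).val → ∃ i, φ i = y := fun y hy =>
    ⟨⟨(y - a).val - l, by omega⟩, by
      change a + ((l + ((y - a).val - l) : ℕ) : Fin (n + 2)) = y
      rw [Nat.add_sub_cancel' hy, Fin.cast_val_eq_self, add_sub_cancel]⟩
  obtain ⟨i, rfl⟩ := hφ u hu
  obtain ⟨j, rfl⟩ := hφ v hv
  obtain ⟨p, hp⟩ := (pathGraph_preconnected _).exists_walk_support_subset_range φ i j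
  refine ⟨p, fun x hx => ?_⟩
  obtain ⟨k, rfl⟩ := hp x hx
  change l ≤ (a + ((l + k.val : ℕ) : Fin (n + 2)) - a).val
  rw [add_sub_cancel_left, Fin.val_cast_of_lt (by omega)]
  exact Nat.le_add_right l k

theorem cycleGraph_not_isCutset_of_mem_iff {S : Finset (Fin (n + 2))} (a : Fin (n + 2)) (l : ℕ)
    (hS : ∀ x, x ∈ S ↔ (x - a).val < l) : ¬ (cycleGraph (n + 2)).IsCutset S := by
  rintro ⟨u, v, hu, hv, -, hsep⟩
  rw [hS, not_lt] at hu hv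
  obtain ⟨p, hp⟩ := cycleGraph_exists_walk_of_le_val_sub a u v hu hv
  obtain ⟨x, hx, hxS⟩ := hsep p
  exact (hp x hx).not_gt ((hS x).1 hxS)

theorem cycleGraph_not_isCutset_of_subset_pair {S : Finset (Fin (n + 2))} (a : Fin (n + 2))
    (hS : S ⊆ {a, a + 1}) : ¬ (cycleGraph (n + 2)).IsCutset S := by
  rw [← coe_subset, coe_pair, Set.subset_pair_iff_eq] at hS
  simp only [coe_eq_empty, coe_eq_singleton, coe_eq_pair] at hS
  rcases hS with rfl | rfl | rfl | rfl
  · exact cycleGraph_not_isCutset_of_mem_iff a 0 (by simp)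
  · exact cycleGraph_not_isCutset_of_mem_iff a 1 fun x => by
      rw [mem_singleton, Fin.val_sub_lt_one_iff]
  · exact cycleGraph_not_isCutset_of_mem_iff (a + 1) 1 fun x => by
      rw [mem_singleton, Fin.val_sub_lt_one_iff]
  · exact cycleGraph_not_isCutset_of_mem_iff a 2 fun x => by
      rw [mem_insert, mem_singleton, Fin.val_sub_lt_two_iff]

theorem cycleGraph_isMinCutset_pair (a : Fin (n + 4)) :
    (cycleGraph (n + 4)).IsMinCutset {a, a + 2} := by
  refine ⟨isCutset_of_forall_adj_mem (u := a + 1) (v := a + 3) ?_ ?_ ?_ fun x hx => ?_, ?_⟩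
  iterate 3 simp [Fin.ext_iff, Nat.mod_eq_of_lt]
  · rw [mem_insert, mem_singleton]
    rcases cycleGraph_adj.1 hx with h | h
    · left; linear_combination -h
    · right; linear_combination h
  · intro S hS hcut
    have ha : a ∈ S := by
      by_contra ha
      refine cycleGraph_not_isCutset_of_subset_pair (a + 2) (fun x hx => ?_) hcut
      obtain rfl | rfl := by simpa using hS hx
      exacts [absurd hx ha, mem_insert_self _ _]
    have hb : a + 2 ∈ S := by
      by_contra hb
      refine cycleGraph_not_isCutset_of_subset_pair a (fun x hx => ?_) hcut
      obtain rfl | rfl := by simpa using hS hx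
      exacts [mem_insert_self _ _, absurd hx hb]
    exact subset_antisymm hS (insert_subset ha (singleton_subset_iff.2 hb))

end Cycle

end SimpleGraph

/-- For every cycle `C_k` with `k ≥ 4`, the cutset hypergraph of `C_k` is 2-summable;
consequently `C_k` is not connected-domishold. -/
theorem cycle_cutsetHypergraph_two_summable (k : ℕ) (hk : 4 ≤ k) :
    HypTwoSummable ((SimpleGraph.cycleGraph k).IsMinCutset) ∧
    ¬ (SimpleGraph.cycleGraph k).ConnectedDomishold := by
  obtain ⟨n, rfl⟩ : ∃ n, k = n + 4 := ⟨k - 4, by omega⟩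
  have h₃ : (1 : Fin (n + 4)) + 2 = 3 := by norm_num
  have h₃' : (2 : Fin (n + 4)) + 1 = 3 := by norm_num
  have hsummable : HypTwoSummable (cycleGraph (n + 4)).IsMinCutset := by
    refine ⟨{0, 2}, {1, 3}, {0, 1}, {2, 3},
      ⟨_, by simpa using cycleGraph_isMinCutset_pair 0, subset_rfl⟩,
      ⟨_, h₃ ▸ cycleGraph_isMinCutset_pair 1, subset_rfl⟩, ?_, ?_, fun v => ?_⟩
    · exact fun e he heB =>
        cycleGraph_not_isCutset_of_subset_pair (n := n + 2) 0 (by simpa using heB) he.1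
    · exact fun e he heB =>
        cycleGraph_not_isCutset_of_subset_pair (n := n + 2) 2 (h₃' ▸ heB) he.1
    · simp only [mem_insert, mem_singleton, Fin.ext_iff, Fin.coe_ofNat_eq_mod, Nat.zero_mod,
        Nat.mod_eq_of_lt (show 1 < n + 4 by omega), Nat.mod_eq_of_lt (show 2 < n + 4 by omega),
        Nat.mod_eq_of_lt (show 3 < n + 4 by omega)]
      split_ifs <;> omega
  exact ⟨hsummable, fun hG => hG.not_hypTwoSummable hsummable⟩
end

section
/- Every minimal connected dominating set of a connected non-complete graph G on n vertices has at most n − 2 vertices. -/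
open SimpleGraph Finset BigOperators

variable {V : Type*} [Fintype V] [DecidableEq V]

/-- aux -/
private lemma reachable_induce_of_walk {G : SimpleGraph V} {S : Finset V} :
    ∀ {a b : V} (p : G.Walk a b), (∀ x ∈ p.support, x ∈ S) → ∀ (ha : a ∈ S) (hb : b ∈ S),
    (G.induce (↑S : Set V)).Reachable ⟨a, ha⟩ ⟨b, hb⟩ := by
  intro a b p
  induction p with
  | nil => intro _ ha hb; exact Reachable.refl _
  | @cons a c b h q ih =>
    intro hsupp ha hb
    have hc : c ∈ S := hsupp c (by simp [SimpleGraph.Walk.support_cons])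
    have hadj : (G.induce (↑S : Set V)).Adj ⟨a, ha⟩ ⟨c, hc⟩ := h
    exact hadj.reachable.trans (ih (fun x hx => hsupp x (by simp [SimpleGraph.Walk.support_cons, hx])) hc hb)

/-- Every minimal connected dominating set of a connected non-complete graph on `n` vertices
has at most `n − 2` vertices. -/
theorem minimal_cdSet_card_le (G : SimpleGraph V) (hconn : G.Connected)
    (hnotcomplete : ∃ u v : V, u ≠ v ∧ ¬ G.Adj u v)
    (S : Finset V) (hS : G.IsCDSet S) (hmin : ∀ S' ⊂ S, ¬ G.IsCDSet S') :
    S.card ≤ Fintype.card V - 2 := by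
  by_contra hcard
  push_neg at hcard
  obtain ⟨u, v, huv, hnadj⟩ := hnotcomplete
  -- card V ≥ 3
  obtain ⟨p⟩ := hconn.preconnected u v
  have h3 : 3 ≤ Fintype.card V := by
    have hn : ¬ p.Nil := SimpleGraph.Walk.not_nil_of_ne huv
    have hadj : G.Adj u (p.getVert 1) := SimpleGraph.Walk.adj_snd hn
    set w := p.getVert 1 with hw
    have hwu : u ≠ w := hadj.ne
    have hwv : w ≠ v := fun h => hnadj (h ▸ hadj)
    have : ({u, w, v} : Finset V).card = 3 := by
      rw [Finset.card_insert_of_notMem (by simp [hwu, huv]),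
          Finset.card_insert_of_notMem (by simp [hwv]), Finset.card_singleton]
    calc 3 = ({u, w, v} : Finset V).card := this.symm
      _ ≤ (Finset.univ : Finset V).card := Finset.card_le_univ _
      _ = Fintype.card V := Finset.card_univ
  have hcardle : S.card ≤ Fintype.card V := by
    simpa using Finset.card_le_univ S
  have hcompl : Sᶜ.card = Fintype.card V - S.card := by
    simp [Finset.card_compl]
  have hcompl1 : Sᶜ.card ≤ 1 := by omega
  have h2card : 2 ≤ S.card := by omega
  -- choose r ∈ S adjacent to everything outside S
  obtain ⟨r, hr, hrdom⟩ : ∃ r ∈ S, ∀ z, z ∉ S → G.Adj r z := by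
    by_cases hz : ∃ z, z ∉ S
    · obtain ⟨z, hz⟩ := hz
      rcases hS.1 z with h | ⟨y, hy, hadj⟩
      · exact absurd h hz
      refine ⟨y, hy, fun w hw => ?_⟩
      have hwz : w = z :=
        Finset.card_le_one.mp hcompl1 w (Finset.mem_compl.2 hw) z (Finset.mem_compl.2 hz)
      rw [hwz]; exact hadj
    · push_neg at hz
      exact ⟨u, hz u, fun z hzS => absurd (hz z) hzS⟩
  set H := G.induce (↑S : Set V) with hH
  have hHconn : H.Connected := by
    have hne : Nonempty {y // y ∈ (↑S : Set V)} := ⟨⟨r, hr⟩⟩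
    refine SimpleGraph.Connected.mk ?_
    rintro ⟨a, ha⟩ ⟨b, hb⟩
    obtain ⟨q, hq⟩ := hS.2 a ha b hb
    exact reachable_induce_of_walk q hq ha hb
  set r' : {x // x ∈ (↑S : Set V)} := ⟨r, hr⟩ with hr'
  obtain ⟨x, -, hx⟩ := Finset.exists_max_image (Finset.univ) (H.dist r') ⟨r', Finset.mem_univ _⟩
  -- avoidance lemma
  have havoid : ∀ u : {x // x ∈ (↑S : Set V)}, u ≠ x → ∃ p : H.Walk r' u, x ∉ p.support := by
    intro u hu
    obtain ⟨p, hp⟩ := (hHconn.preconnected r' u).exists_walk_length_eq_dist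
    refine ⟨p, fun hxs => ?_⟩
    have h1 := SimpleGraph.dist_le (p.takeUntil x hxs)
    have h2 := SimpleGraph.dist_le (p.dropUntil x hxs)
    have h3 : (p.takeUntil x hxs).length + (p.dropUntil x hxs).length = p.length := by
      rw [← SimpleGraph.Walk.length_append, SimpleGraph.Walk.take_spec]
    have h4 := hx u (Finset.mem_univ u)
    have h5 : H.dist x u = 0 := by omega
    exact hu (((hHconn.preconnected x u).dist_eq_zero_iff.mp h5)).symm
  -- x ≠ r'
  have hxr : x ≠ r' := by
    obtain ⟨s, hs, hsr⟩ := Finset.exists_mem_ne (by omega : 1 < S.card) r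
    have hs' : (⟨s, hs⟩ : {x // x ∈ (↑S : Set V)}) ≠ r' := by
      simp [hr', Subtype.ext_iff, hsr]
    have hpos : 0 < H.dist r' ⟨s, hs⟩ := hHconn.pos_dist_of_ne (Ne.symm hs')
    have hle := hx ⟨s, hs⟩ (Finset.mem_univ _)
    intro h
    rw [h, SimpleGraph.dist_self] at hle
    omega
  -- x has a neighbor in S
  obtain ⟨xnb, hxnb⟩ : ∃ b : {y // y ∈ (↑S : Set V)}, H.Adj x b := by
    obtain ⟨q⟩ := hHconn.preconnected x r'
    cases q with
    | nil => exact absurd rfl hxr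
    | cons h q' => exact ⟨_, h⟩
  have hxnbne : xnb ≠ x := hxnb.ne'
  -- the inclusion homomorphism
  let ι : H →g G := ⟨Subtype.val, fun {a b} h => h⟩
  have hιsupp : ∀ {a b : {y // y ∈ (↑S : Set V)}} (q : H.Walk a b) (y : V),
      y ∈ (q.map ι).support → ∃ c ∈ q.support, (c : V) = y := by
    intro a b q y hy
    rw [SimpleGraph.Walk.support_map] at hy
    exact List.mem_map.1 hy
  have hCDS : G.IsCDSet (S.erase (x : V)) := by
    constructor
    · intro w
      by_cases hwS : w ∈ S
      · by_cases hwx : w = (x : V)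
        · right
          refine ⟨(xnb : V), Finset.mem_erase.2 ⟨fun h => hxnbne (Subtype.ext h), xnb.2⟩, ?_⟩
          rw [hwx]
          exact (hxnb.symm : G.Adj (xnb : V) (x : V))
        · left; exact Finset.mem_erase.2 ⟨hwx, hwS⟩
      · right
        refine ⟨r, Finset.mem_erase.2 ⟨?_, hr⟩, hrdom w hwS⟩
        intro h
        exact hxr (Subtype.ext h.symm)
    · intro a ha b hb
      obtain ⟨hax, haS⟩ := Finset.mem_erase.1 ha
      obtain ⟨hbx, hbS⟩ := Finset.mem_erase.1 hb
      have ha' : (⟨a, haS⟩ : {y // y ∈ (↑S : Set V)}) ≠ x := fun h => hax (congrArg Subtype.val h)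
      have hb' : (⟨b, hbS⟩ : {y // y ∈ (↑S : Set V)}) ≠ x := fun h => hbx (congrArg Subtype.val h)
      obtain ⟨pa, hpa⟩ := havoid ⟨a, haS⟩ ha'
      obtain ⟨pb, hpb⟩ := havoid ⟨b, hbS⟩ hb'
      refine ⟨(pa.reverse.append pb).map ι, ?_⟩
      intro y hy
      obtain ⟨c, hc, hcy⟩ := hιsupp _ y hy
      have hcS : (c : V) ∈ S := c.2
      have hcx : c ≠ x := by
        rw [SimpleGraph.Walk.mem_support_append_iff] at hc
        rcases hc with hc | hc
        · rw [SimpleGraph.Walk.support_reverse] at hc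
          exact fun h => hpa (h ▸ List.mem_reverse.1 hc)
        · exact fun h => hpb (h ▸ hc)
      subst hcy
      exact Finset.mem_erase.2 ⟨fun h => hcx (Subtype.ext h), hcS⟩
  exact hmin _ (Finset.erase_ssubset x.2) hCDS
end

section
/- Let H = (V, E) be a hypergraph with no empty hyperedge, and let G be its split-incidence graph: V(G) = V ∪ E, with V a clique, E an independent set, and v ∈ V adjacent to e ∈ E iff v ∈ e. Then H is threshold if and only if G is connected-domishold. -/
open SimpleGraph Finset BigOperators

variable {V : Type*} [Fintype V] [DecidableEq V]

/-- The split-incidence graph of a hypergraph with hyperedge set `E`: vertices are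
`V ⊕ {e // e ∈ E}`, the copy of `V` is a clique, the hyperedges form an independent set, and
`v` is adjacent to `e` iff `v ∈ e`. -/
def splitIncidence (E : Finset (Finset V)) : SimpleGraph (V ⊕ {e // e ∈ E}) :=
  SimpleGraph.fromRel (fun p q =>
    (∃ u v : V, p = Sum.inl u ∧ q = Sum.inl v) ∨
    (∃ (v : V) (e : {e // e ∈ E}), p = Sum.inl v ∧ q = Sum.inr e ∧ v ∈ e.val))

/-! Unless every hyperedge is all of `V` (and then the split-incidence graph is complete), a set
`S` of vertices of the split-incidence graph is a connected dominating set exactly when its part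
in `V` meets every hyperedge: the clique `V` makes such a set connected and dominating, while a
connected set missing `V` consists of at most one hyperedge vertex. Passing to complements in `V`,
a threshold structure `(w, t)` of the hypergraph therefore corresponds to the connected-domishold
structure that gives the hyperedge vertices weight `0` and has threshold `w(V) - t`. -/

theorem Finset.sum_le_iff_sub_le_sum_compl {ι : Type*} [Fintype ι] [DecidableEq ι]
    (w : ι → ℝ) (X : Finset ι) (t : ℝ) :
    ∑ i ∈ X, w i ≤ t ↔ ∑ i, w i - t ≤ ∑ i ∈ Xᶜ, w i := by
  rw [← Finset.sum_add_sum_compl X w]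
  constructor <;> intro <;> linarith

namespace SimpleGraph

variable {α : Type*} {G : SimpleGraph α} {S : Finset α}

theorem exists_walk_within_of_eq_or_adj {u v : α} (hu : u ∈ S) (hv : v ∈ S)
    (h : u = v ∨ G.Adj u v) : ∃ p : G.Walk u v, ∀ x ∈ p.support, x ∈ S := by
  rcases h with rfl | h
  · exact ⟨Walk.nil, by simpa using hu⟩
  · exact ⟨h.toWalk, by simp [hu, hv]⟩

theorem exists_walk_within_of_isClique {K : Set α} (hKS : ∀ k ∈ K, k ∈ S) (hK : G.IsClique K)
    (hS : ∀ x ∈ S, ∃ k ∈ K, x = k ∨ G.Adj x k) :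
    ∀ u ∈ S, ∀ v ∈ S, ∃ p : G.Walk u v, ∀ x ∈ p.support, x ∈ S := by
  intro u hu v hv
  obtain ⟨a, haK, hua⟩ := hS u hu
  obtain ⟨b, hbK, hvb⟩ := hS v hv
  obtain ⟨p, hp⟩ := exists_walk_within_of_eq_or_adj hu (hKS a haK) hua
  obtain ⟨q, hq⟩ := exists_walk_within_of_eq_or_adj (hKS a haK) (hKS b hbK)
    ((eq_or_ne a b).imp_right (hK haK hbK))
  obtain ⟨r, hr⟩ := exists_walk_within_of_eq_or_adj hv (hKS b hbK) hvb
  refine ⟨(p.append q).append r.reverse, fun x hx => ?_⟩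
  simp only [Walk.mem_support_append_iff, Walk.support_reverse, List.mem_reverse] at hx
  rcases hx with (hx | hx) | hx
  exacts [hp x hx, hq x hx, hr x hx]

theorem not_isCDSet_empty [Nonempty α] : ¬ G.IsCDSet ∅ := fun h => by
  simpa using h.1 (Classical.arbitrary α)

theorem isCDSet_of_isEmpty [IsEmpty α] (G : SimpleGraph α) (S : Finset α) : G.IsCDSet S :=
  ⟨isEmptyElim, fun u => isEmptyElim u⟩

theorem isCDSet_top_iff [Nonempty α] : (⊤ : SimpleGraph α).IsCDSet S ↔ S.Nonempty := by
  refine ⟨fun h => ?_, fun ⟨a, ha⟩ => ⟨fun v => ?_, ?_⟩⟩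
  · rw [Finset.nonempty_iff_ne_empty]
    rintro rfl
    exact not_isCDSet_empty h
  · rcases eq_or_ne a v with rfl | hav
    exacts [.inl ha, .inr ⟨a, ha, hav⟩]
  · exact exists_walk_within_of_isClique (K := S) (fun _ => id) (IsClique.top _)
      fun x hx => ⟨x, hx, .inl rfl⟩

theorem connectedDomishold_top [Fintype α] : (⊤ : SimpleGraph α).ConnectedDomishold := by
  cases isEmpty_or_nonempty α
  · exact ⟨0, 0, fun _ => le_rfl, le_rfl,
      fun S => iff_of_true (by simp) (isCDSet_of_isEmpty _ _)⟩
  · refine ⟨1, 1, fun _ => zero_le_one, zero_le_one, fun S => ?_⟩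
    rw [isCDSet_top_iff, ← Finset.card_pos]
    simp [Nat.one_le_iff_ne_zero, Nat.pos_iff_ne_zero]

end SimpleGraph

namespace splitIncidence

variable {α : Type*} {E : Finset (Finset α)} {S : Finset (α ⊕ {e // e ∈ E})}

@[simp]
theorem adj_inl_inl {u v : α} : (splitIncidence E).Adj (.inl u) (.inl v) ↔ u ≠ v := by
  simp [splitIncidence]

@[simp]
theorem adj_inl_inr {v : α} {e : {e // e ∈ E}} :
    (splitIncidence E).Adj (.inl v) (.inr e) ↔ v ∈ e.1 := by
  simp [splitIncidence]

@[simp]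
theorem adj_inr_inl {v : α} {e : {e // e ∈ E}} :
    (splitIncidence E).Adj (.inr e) (.inl v) ↔ v ∈ e.1 := by
  simp [splitIncidence]

@[simp]
theorem not_adj_inr_inr {e f : {e // e ∈ E}} : ¬ (splitIncidence E).Adj (.inr e) (.inr f) := by
  simp [splitIncidence]

theorem eq_top_of_subset [Fintype α] (h : E ⊆ {univ}) : splitIncidence E = ⊤ := by
  have huniv (e : {e // e ∈ E}) : e.1 = univ := Finset.mem_singleton.1 (h e.2)
  ext (u | e) (v | f)
  · simp
  · simp [huniv]
  · simp [huniv]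
  · simpa using Subtype.ext ((huniv e).trans (huniv f).symm)

theorem isClique_range_inl : (splitIncidence E).IsClique (Set.range Sum.inl) := by
  rintro _ ⟨u, rfl⟩ _ ⟨v, rfl⟩ huv
  simpa using huv

theorem exists_inl_mem_support {e : {e // e ∈ E}} {y : α ⊕ {e // e ∈ E}}
    (p : (splitIncidence E).Walk (.inr e) y) (hy : y ≠ .inr e) :
    ∃ u ∈ e.1, .inl u ∈ p.support := by
  cases p with
  | nil => exact absurd rfl hy
  | @cons _ x _ h q =>
    cases x with
    | inl u => exact ⟨u, by simpa using h, by simp⟩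
    | inr f => simp at h

theorem isCDSet_iff_of_inl_mem {a : α} (ha : .inl a ∈ S) :
    (splitIncidence E).IsCDSet S ↔ ∀ e ∈ E, ∃ v ∈ e, .inl v ∈ S := by
  refine ⟨fun h e he => ?_, fun hS => ⟨?_, ?_⟩⟩
  · by_cases heS : .inr ⟨e, he⟩ ∈ S
    · obtain ⟨p, hp⟩ := h.2 _ heS _ ha
      obtain ⟨v, hv, hvp⟩ := exists_inl_mem_support p (by simp)
      exact ⟨v, hv, hp _ hvp⟩
    · obtain ⟨v | f, hxS, hx⟩ := (h.1 _).resolve_left heS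
      · exact ⟨v, by simpa using hx, hxS⟩
      · simp at hx
  · rintro (v | e)
    · rcases eq_or_ne a v with rfl | hav
      exacts [.inl ha, .inr ⟨_, ha, by simpa using hav⟩]
    · obtain ⟨v, hv, hvS⟩ := hS e.1 e.2
      exact .inr ⟨_, hvS, by simpa using hv⟩
  · refine exists_walk_within_of_isClique (K := Set.range Sum.inl ∩ S) (fun _ hk => hk.2)
      (isClique_range_inl.subset Set.inter_subset_left) ?_
    rintro (u | e) hx
    · exact ⟨_, ⟨⟨u, rfl⟩, hx⟩, .inl rfl⟩
    · obtain ⟨v, hv, hvS⟩ := hS e.1 e.2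
      exact ⟨_, ⟨⟨v, rfl⟩, hvS⟩, .inr (by simpa using hv)⟩

/-- If `S` avoided `V`, it would contain the vertex of a hyperedge `e ≠ V` (whose neighbours all
lie in `V`) and a hyperedge vertex dominating some `v ∉ e`; no walk inside `S` joins the two. -/
theorem exists_inl_mem_of_isCDSet [Fintype α] (hE : ¬ E ⊆ {univ})
    (h : (splitIncidence E).IsCDSet S) :
    ∃ a, .inl a ∈ S := by
  by_contra! hS
  obtain ⟨e, he, he_ne⟩ := Finset.not_subset.1 hE
  obtain ⟨v, hv⟩ : ∃ v, v ∉ e := by simpa [Finset.eq_univ_iff_forall] using he_ne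
  obtain ⟨u | f, hfS, hvf⟩ := (h.1 (.inl v)).resolve_left (hS v)
  · exact hS u hfS
  have heS : .inr ⟨e, he⟩ ∈ S := by
    refine (h.1 _).resolve_right ?_
    rintro ⟨u | g, hgS, hg⟩
    exacts [hS u hgS, by simp at hg]
  obtain ⟨p, hp⟩ := h.2 _ heS _ hfS
  obtain ⟨u, -, hu⟩ := exists_inl_mem_support p fun hfe => by
    simp only [adj_inr_inl, Sum.inr.injEq] at hvf hfe
    subst hfe
    exact hv hvf
  exact hS u (hp _ hu)

theorem isCDSet_iff [Fintype α] (hE : ¬ E ⊆ {univ}) :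
    (splitIncidence E).IsCDSet S ↔ ∀ e ∈ E, ∃ v ∈ e, .inl v ∈ S := by
  refine ⟨fun h => ?_, fun h => ?_⟩
  · obtain ⟨a, ha⟩ := exists_inl_mem_of_isCDSet hE h
    exact (isCDSet_iff_of_inl_mem ha).1 h
  · obtain ⟨e, he, -⟩ := Finset.not_subset.1 hE
    obtain ⟨a, -, ha⟩ := h e he
    exact (isCDSet_iff_of_inl_mem ha).2 h

theorem isCDSet_disjSum_empty_iff (hne : E.Nonempty) (Y : Finset α) :
    (splitIncidence E).IsCDSet (Y.disjSum ∅) ↔ ∀ e ∈ E, ∃ v ∈ e, v ∈ Y := by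
  rcases Y.eq_empty_or_nonempty with rfl | ⟨a, ha⟩
  · obtain ⟨e, he⟩ := hne
    have : Nonempty (α ⊕ {e // e ∈ E}) := ⟨.inr ⟨e, he⟩⟩
    exact iff_of_false not_isCDSet_empty fun h => by simpa using h e he
  · rw [isCDSet_iff_of_inl_mem (a := a) (by simpa using ha)]
    simp

theorem connectedDomishold_of_hypThreshold [Fintype α] [DecidableEq α] (hE : ¬ E ⊆ {univ})
    (h : HypThreshold (· ∈ E)) :
    (splitIncidence E).ConnectedDomishold := by
  obtain ⟨w, t, hw, -, hwt⟩ := h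
  obtain ⟨e, he, -⟩ := Finset.not_subset.1 hE
  have ht : t < ∑ v, w v := lt_of_not_ge fun hle => (hwt univ).1 hle e he (subset_univ e)
  refine ⟨Sum.elim w 0, ∑ v, w v - t, ?_, by linarith, fun S => ?_⟩
  · rintro (v | f)
    exacts [hw v, le_rfl]
  calc ∑ v, w v - t ≤ ∑ x ∈ S, Sum.elim w 0 x
      ↔ ∑ v ∈ S.toLeftᶜ, w v ≤ t := by
        rw [sum_sum_eq_sum_toLeft_add_sum_toRight, sum_le_iff_sub_le_sum_compl, compl_compl]
        simp
    _ ↔ ∀ e ∈ E, ¬ e ⊆ S.toLeftᶜ := hwt _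
    _ ↔ (splitIncidence E).IsCDSet S := by
        simp [isCDSet_iff hE, Finset.not_subset]

theorem hypThreshold_of_connectedDomishold [Fintype α] [DecidableEq α] (hE : ∅ ∉ E)
    (hne : E.Nonempty) (h : (splitIncidence E).ConnectedDomishold) : HypThreshold (· ∈ E) := by
  obtain ⟨w, t, hw, -, hwt⟩ := h
  have hsum (Y : Finset α) : ∑ x ∈ Y.disjSum ∅, w x = ∑ v ∈ Y, w (.inl v) := by simp
  have ht : t ≤ ∑ v, w (.inl v) := by
    rw [← hsum, hwt, isCDSet_disjSum_empty_iff hne]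
    intro e he
    obtain ⟨v, hv⟩ := Finset.nonempty_iff_ne_empty.2 (ne_of_mem_of_not_mem he hE)
    exact ⟨v, hv, mem_univ v⟩
  refine ⟨fun v => w (.inl v), ∑ v, w (.inl v) - t, fun v => hw _, by linarith, fun X => ?_⟩
  rw [sum_le_iff_sub_le_sum_compl, sub_sub_cancel, ← hsum, hwt, isCDSet_disjSum_empty_iff hne]
  simp [Finset.not_subset]

end splitIncidence

/-- A hypergraph with no empty hyperedge is threshold iff its split-incidence graph is
connected-domishold. -/
theorem hypThreshold_iff_splitIncidence_connectedDomishold (E : Finset (Finset V))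
    (hE : ∅ ∉ E) :
    HypThreshold (· ∈ E) ↔ (splitIncidence E).ConnectedDomishold := by
  constructor
  · intro hH
    by_cases huniv : E ⊆ {univ}
    · rw [splitIncidence.eq_top_of_subset huniv]
      exact connectedDomishold_top
    · exact splitIncidence.connectedDomishold_of_hypThreshold huniv hH
  · intro hG
    rcases E.eq_empty_or_nonempty with rfl | hne
    · exact ⟨0, 0, fun _ => le_rfl, le_rfl, fun X => iff_of_true (by simp) (by simp)⟩
    · exact splitIncidence.hypThreshold_of_connectedDomishold hE hne hG
end
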